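/- arXiv:1507.05343 — 9 statements merged into one kernel-verified Lean document; each statement's English description precedes it below -/
import Mathlib

section
/- Let μ be a compactly supported probability measure on ℝ whose free cumulants satisfy κ₁ = 0, κ₂ = γν, and κ_l = a^l γ^{l-1} for all l ≥ 3, where a ≥ 0, ν > 0, γ > 0. Then every moment ∫ x^l dμ(x) is non-negative, and consequently max supp(μ) ≥ -min supp(μ). -/
/-!
All free cumulants are non-negative, so every moment, being a sum of products of cumulants, is
non-negative. Conversely, if `max supp μ < -min supp μ`, then near `min supp μ` there is mass
`c > 0` at points `≤ -b` with `max supp μ < b`, and for a large odd `n` the contribution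
`≤ -c b ^ n` of that mass to the `n`-th moment outweighs the rest, which is `O((max supp μ) ^ n)`.
-/

open MeasureTheory

/-- A non-crossing partition of `{0, ..., l-1}`, encoded as a finite set of blocks:
blocks are nonempty, pairwise disjoint, cover everything, and are non-crossing. -/
def IsNCPartition (l : ℕ) (P : Finset (Finset (Fin l))) : Prop :=
  (∀ S ∈ P, S.Nonempty) ∧
  (∀ S ∈ P, ∀ T ∈ P, S ≠ T → Disjoint S T) ∧
  (P.biUnion id = Finset.univ) ∧
  (∀ a b c d : Fin l, a < b → b < c → c < d →
    ∀ S ∈ P, ∀ T ∈ P, a ∈ S → c ∈ S → b ∈ T → d ∈ T → S = T)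

open Measure Set

theorem integrable_of_isCompact_support {X E : Type*} [TopologicalSpace X] [MeasurableSpace X]
    [OpensMeasurableSpace X] [HereditarilyLindelofSpace X] [T2Space X]
    [NormedAddCommGroup E] {μ : Measure X} [IsFiniteMeasure μ] (hK : IsCompact μ.support)
    {f : X → E} (hf : Continuous f) : Integrable f μ := by
  have := hf.continuousOn.integrableOn_compact hK (μ := μ)
  rwa [IntegrableOn, restrict_eq_self_of_ae_mem (s := μ.support) support_mem_ae] at this

theorem Real.setOf_forall_measure_Ioo_pos_eq_support (μ : Measure ℝ) :
    {x : ℝ | ∀ ε > 0, 0 < μ (Ioo (x - ε) (x + ε))} = μ.support := by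
  ext x
  simp only [mem_ofPred_eq, Metric.nhds_basis_ball.mem_measureSupport, Real.ball_eq_Ioo]

theorem exists_integral_pow_neg_of_measure_Iic_pos {μ : Measure ℝ} [IsFiniteMeasure μ]
    (hint : ∀ n : ℕ, Integrable (fun x => x ^ n) μ) {M b : ℝ} (hM : 0 ≤ M) (hMb : M < b)
    (hle : ∀ᵐ x ∂μ, x ≤ M) (hpos : 0 < μ (Iic (-b))) : ∃ n : ℕ, ∫ x, x ^ n ∂μ < 0 := by
  have hb : 0 < b := hM.trans_lt hMb
  set c := μ.real (Iic (-b))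
  have hc : 0 < c := ENNReal.toReal_pos hpos.ne' (measure_ne_top _ _)
  have hT : 0 < μ.real univ := hc.trans_le (measureReal_mono (μ := μ) (subset_univ _))
  obtain ⟨k, hk⟩ : ∃ k : ℕ, (M / b) ^ k < c / μ.real univ :=
    exists_pow_lt_of_lt_one (by positivity) ((div_lt_one hb).2 hMb)
  have hodd : Odd (2 * k + 1) := odd_two_mul_add_one k
  set n := 2 * k + 1
  have hsmall : M ^ n * μ.real univ < c * b ^ n := by
    have hnk : (M / b) ^ n ≤ (M / b) ^ k :=
      pow_le_pow_of_le_one (by positivity) ((div_le_one hb).2 hMb.le) (by omega)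
    have := (lt_div_iff₀ hT).1 (hnk.trans_lt hk)
    rwa [div_pow, div_mul_eq_mul_div, div_lt_iff₀ (by positivity)] at this
  set g : ℝ → ℝ := (Iic (-b)).piecewise (fun _ => -b ^ n) (fun _ => M ^ n)
  have hg : ∀ᵐ x ∂μ, x ^ n ≤ g x := by
    filter_upwards [hle] with x hx
    by_cases h : x ∈ Iic (-b)
    · simpa [g, h, hodd.neg_pow] using hodd.strictMono_pow.monotone (mem_Iic.1 h)
    · simpa [g, h] using hodd.strictMono_pow.monotone hx
  refine ⟨n, ?_⟩
  calc ∫ x, x ^ n ∂μ ≤ ∫ x, g x ∂μ :=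
        integral_mono_ae (hint n) (Integrable.piecewise measurableSet_Iic
          (integrable_const _).integrableOn (integrable_const _).integrableOn) hg
    _ = c * -b ^ n + μ.real (Iic (-b))ᶜ * M ^ n := by
        simp [g, integral_piecewise measurableSet_Iic, c]
    _ ≤ c * -b ^ n + μ.real univ * M ^ n := by
        gcongr
        · exact measure_ne_top μ univ
        · exact subset_univ _
    _ < 0 := by linarith

theorem neg_sInf_support_le_sSup_support {μ : Measure ℝ} [IsFiniteMeasure μ]
    (hK : IsCompact μ.support) (hmom : ∀ n : ℕ, 0 ≤ ∫ x, x ^ n ∂μ) :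
    -sInf μ.support ≤ sSup μ.support := by
  obtain hS | hS := μ.support.eq_empty_or_nonempty
  · simp [hS]
  by_contra! hlt
  set m := sInf μ.support
  set M := max (sSup μ.support) 0
  have hm : m ∈ μ.support := hK.isClosed.csInf_mem hS hK.bddBelow
  have hMm : M < -m := max_lt hlt (by linarith [csInf_le_csSup hS hK.bddBelow hK.bddAbove])
  have hle : ∀ᵐ x ∂μ, x ≤ M := by
    filter_upwards [support_mem_ae] with x hx
    exact (le_csSup hK.bddAbove hx).trans (le_max_left _ _)
  have hpos : 0 < μ (Iic (-((M - m) / 2))) :=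
    (mem_support_iff_forall m).1 hm _ (Iic_mem_nhds (by linarith))
  obtain ⟨n, hn⟩ := exists_integral_pow_neg_of_measure_Iic_pos
    (fun n => integrable_of_isCompact_support hK (continuous_pow n)) (le_max_right _ _)
    (by linarith) hle hpos
  exact (hmom n).not_gt hn

open scoped Classical in
theorem sum_isNCPartition_prod_nonneg {κ : ℕ → ℝ} (hκ : ∀ n, 0 < n → 0 ≤ κ n) (l : ℕ) :
    0 ≤ ∑ P ∈ Finset.univ.filter (IsNCPartition l), ∏ S ∈ P, κ S.card :=
  Finset.sum_nonneg fun _ hP => Finset.prod_nonneg fun S hS =>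
    hκ _ ((Finset.mem_filter.1 hP).2.1 S hS).card_pos

open scoped Classical in
theorem stmt0 (μ : Measure ℝ) [IsProbabilityMeasure μ]
    (hcomp : ∃ K : Set ℝ, IsCompact K ∧ μ Kᶜ = 0)
    (a ν γ : ℝ) (ha : 0 ≤ a) (hν : 0 < ν) (hγ : 0 < γ)
    (κ : ℕ → ℝ) (hκ1 : κ 1 = 0) (hκ2 : κ 2 = γ * ν)
    (hκ : ∀ l : ℕ, 3 ≤ l → κ l = a ^ l * γ ^ (l - 1))
    (hmom : ∀ l : ℕ,
      ∫ x, x ^ l ∂μ =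
        ∑ P ∈ Finset.univ.filter (IsNCPartition l), ∏ S ∈ P, κ S.card) :
    (∀ l : ℕ, 0 ≤ ∫ x, x ^ l ∂μ) ∧
      -sInf {x : ℝ | ∀ ε > 0, 0 < μ (Set.Ioo (x - ε) (x + ε))} ≤
        sSup {x : ℝ | ∀ ε > 0, 0 < μ (Set.Ioo (x - ε) (x + ε))} := by
  have hκ_nonneg : ∀ n, 0 < n → 0 ≤ κ n := by
    rintro (_ | _ | _ | n) hn
    · omega
    · rw [hκ1]
    · rw [hκ2]; positivity
    · rw [hκ _ (by omega)]; positivity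
  have hmom_nonneg (l : ℕ) : 0 ≤ ∫ x, x ^ l ∂μ :=
    hmom l ▸ sum_isNCPartition_prod_nonneg hκ_nonneg l
  obtain ⟨K, hK, hKc⟩ := hcomp
  have hsupp : IsCompact μ.support :=
    hK.of_isClosed_subset isClosed_support (support_subset_of_isClosed hK.isClosed hKc)
  rw [Real.setOf_forall_measure_Ioo_pos_eq_support]
  exact ⟨hmom_nonneg, neg_sInf_support_le_sSup_support hsupp hmom_nonneg⟩
end

section
/- Let z_1,...,z_n be i.i.d. random variables with E[z_j] = 0, E[z_j²] = 1, and finite absolute moments of all orders. Let p_1,...,p_d be polynomials with E[p_i(z_1)] = 0 for each i. Then for every α, β > 0 and all sufficiently large n, P[ n^{−d/2} |Σ_{j_1 ≠ j_2 ≠ ... ≠ j_d, 1 ≤ j_s ≤ n} Π_{i=1}^d p_i(z_{j_i})| > n^α ] < n^{−β}, where the sum is over tuples of pairwise distinct indices. -/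
/-!
Raising `S_n = ∑_{f injective} ∏ᵢ pᵢ(z_{f i})` to the power `2m` gives a sum over words
`w : Fin (2m) × Fin d → Fin n`. By independence, the expectation of each term factors over the
fibres of `w`, so it vanishes as soon as some index occurs exactly once, since every `pᵢ` is
centred. The surviving words take at most `md` distinct values, so there are `O(n^{md})` of them,
and each term is bounded by a constant coming from the moment assumption. Hence the `2m`-th moment
of `n^{-d/2} S_n` is bounded uniformly in `n`, and Markov's inequality bounds the probability by
`O(n^{-2mα})`, which is below `n^{-β}` once `2mα > β`.
-/

open MeasureTheory ProbabilityTheory Finset Polynomial Filter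

theorem integrable_eval_of_integrable_abs_pow {Ω : Type*} [MeasurableSpace Ω] {μ : Measure Ω}
    {Y : Ω → ℝ} (hY : AEMeasurable Y μ) (hmom : ∀ k : ℕ, Integrable (fun ω => |Y ω| ^ k) μ)
    (q : ℝ[X]) : Integrable (fun ω => q.eval (Y ω)) μ := by
  induction q using Polynomial.induction_on' with
  | add q r hq hr =>
    simp only [eval_add]
    exact hq.add hr
  | monomial k a =>
    simp only [eval_monomial]
    refine ((hmom k).mono' (hY.pow_const k).aestronglyMeasurable ?_).const_mul a
    filter_upwards with ω
    rw [Real.norm_eq_abs, abs_pow]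

theorem ProbabilityTheory.iIndepFun.integrable_finsetProd {Ω ι : Type*} [MeasurableSpace Ω]
    {μ : Measure Ω} {X : ι → Ω → ℝ} (hX : iIndepFun X μ)
    (hint : ∀ j, Integrable (X j) μ) (s : Finset ι) : Integrable (∏ j ∈ s, X j) μ := by
  classical
  have := hX.isProbabilityMeasure
  induction s using Finset.induction_on with
  | empty =>
    rw [prod_empty]
    exact integrable_const 1
  | insert j s hj ih =>
    rw [prod_insert hj, mul_comm]
    exact (hX.indepFun_finsetProd_of_notMem₀ (fun k => (hint k).aemeasurable) hj).integrable_mul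
      ih (hint j)

section Fibers

variable {ι κ : Type*} [DecidableEq ι] [Fintype κ]

noncomputable def fiberProd (w : κ → ι) (q : κ → ℝ[X]) (j : ι) : ℝ[X] :=
  ∏ a ∈ univ.filter (fun a => w a = j), q a

theorem prod_eval_comp_eq_prod_eval_fiberProd [Fintype ι] (w : κ → ι) (q : κ → ℝ[X]) (x : ι → ℝ) :
    ∏ a, (q a).eval (x (w a)) = ∏ j, (fiberProd w q j).eval (x j) := by
  rw [← prod_fiberwise univ w]
  refine prod_congr rfl fun j _ => ?_
  rw [fiberProd, eval_prod]
  exact prod_congr rfl fun a ha => by rw [(mem_filter.mp ha).2]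

theorem fiberProd_eq_one_of_notMem_image {w : κ → ι} {q : κ → ℝ[X]} {j : ι}
    (hj : j ∉ univ.image w) : fiberProd w q j = 1 := by
  have hempty : univ.filter (fun a => w a = j) = ∅ :=
    filter_eq_empty_iff.mpr fun a _ (h : w a = j) => hj (h ▸ mem_image_of_mem w (mem_univ a))
  rw [fiberProd, hempty, prod_empty]

theorem abs_eval_fiberProd_le {q : κ → ℝ[X]} {P : ℝ[X]} (hqP : ∀ a y, |(q a).eval y| ≤ P.eval y)
    (hP : ∀ y, 1 ≤ P.eval y) (w : κ → ι) (j : ι) (y : ℝ) :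
    |(fiberProd w q j).eval y| ≤ (P ^ Fintype.card κ).eval y := by
  rw [fiberProd, eval_prod, abs_prod, eval_pow]
  calc ∏ a ∈ univ.filter (fun a => w a = j), |(q a).eval y|
      ≤ ∏ a ∈ univ.filter (fun a => w a = j), P.eval y :=
        prod_le_prod (fun _ _ => abs_nonneg _) fun a _ => hqP a y
    _ = P.eval y ^ #(univ.filter (fun a => w a = j)) := prod_const _
    _ ≤ P.eval y ^ Fintype.card κ := pow_le_pow_right₀ (hP y) (card_le_univ _)

theorem two_mul_card_image_le_of_card_fiber_ne_one {w : κ → ι}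
    (hw : ∀ j, #{a | w a = j} ≠ 1) : 2 * #(univ.image w) ≤ Fintype.card κ := by
  rw [← card_univ, card_eq_sum_card_image w univ, mul_comm, ← smul_eq_mul, ← sum_const]
  refine sum_le_sum fun j hj => ?_
  obtain ⟨a, -, rfl⟩ := mem_image.mp hj
  have : 0 < #{b | w b = w a} := card_pos.mpr ⟨a, by simp⟩
  have := hw (w a)
  omega

theorem card_filter_card_image_le [Fintype ι] [DecidableEq κ] {r : ℕ} (hr : r ≤ Fintype.card ι) :
    #{w : κ → ι | #(univ.image w) ≤ r} ≤ (Fintype.card ι).choose r * r ^ Fintype.card κ := by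
  have hsub : ({w : κ → ι | #(univ.image w) ≤ r} : Finset (κ → ι)) ⊆
      (powersetCard r (univ : Finset ι)).biUnion (fun R => Fintype.piFinset fun _ => R) := by
    intro w hw
    obtain ⟨R, himR, -, hR⟩ :=
      exists_subsuperset_card_eq (subset_univ (univ.image w)) (mem_filter.mp hw).2 (by simpa)
    exact mem_biUnion.mpr ⟨R, mem_powersetCard.mpr ⟨subset_univ R, hR⟩,
      Fintype.mem_piFinset.mpr fun a => himR (mem_image_of_mem w (mem_univ a))⟩
  calc _ ≤ _ := card_le_card hsub
    _ ≤ ∑ R ∈ powersetCard r (univ : Finset ι), #(Fintype.piFinset fun _ : κ => R) :=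
        card_biUnion_le
    _ = _ := by
        rw [sum_congr rfl fun R hR => by
          rw [Fintype.card_piFinset, prod_const, card_univ, (mem_powersetCard.mp hR).2], sum_const,
          card_powersetCard, card_univ, smul_eq_mul]

end Fibers

theorem sum_prod_pow_eq_sum_piFinset {R ι δ : Type*} [CommSemiring R] [Fintype δ]
    (F : δ → ι → R) (A : Finset (δ → ι)) (L : ℕ) :
    (∑ f ∈ A, ∏ i, F i (f i)) ^ L =
      ∑ g ∈ Fintype.piFinset fun _ : Fin L => A, ∏ a : Fin L × δ, F a.2 (g a.1 a.2) := by
  rw [← Fin.prod_const, prod_univ_sum]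
  exact sum_congr rfl fun g _ =>
    (Fintype.prod_prod_type fun a : Fin L × δ => F a.2 (g a.1 a.2)).symm

theorem one_le_integral_eval_pow {Ω : Type*} [MeasurableSpace Ω] {μ : Measure Ω}
    [IsProbabilityMeasure μ] {Y : Ω → ℝ} (hY : AEMeasurable Y μ)
    (hmom : ∀ k : ℕ, Integrable (fun ω => |Y ω| ^ k) μ) {P : ℝ[X]} (hP : ∀ y, 1 ≤ P.eval y)
    (N : ℕ) : 1 ≤ ∫ ω, (P ^ N).eval (Y ω) ∂μ :=
  calc (1 : ℝ) = ∫ _, (1 : ℝ) ∂μ := by simp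
    _ ≤ _ := integral_mono (integrable_const 1) (integrable_eval_of_integrable_abs_pow hY hmom _)
        fun ω => by simpa only [eval_pow] using one_le_pow₀ (hP (Y ω))

section Moments

variable {Ω ι κ : Type*} [MeasurableSpace Ω] {μ : Measure Ω}
  [Fintype ι] [DecidableEq ι] [Fintype κ] {z : ι → Ω → ℝ} {Y : Ω → ℝ}

theorem integral_prod_eval_comp_eq (hindep : iIndepFun z μ)
    (hident : ∀ j, IdentDistrib (z j) Y μ μ) (w : κ → ι) (q : κ → ℝ[X]) :
    ∫ ω, ∏ a, (q a).eval (z (w a) ω) ∂μ = ∏ j, ∫ ω, (fiberProd w q j).eval (Y ω) ∂μ := by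
  simp_rw [fun ω => prod_eval_comp_eq_prod_eval_fiberProd w q (z · ω)]
  rw [hindep.integral_fun_prod_comp (fun j => (hident j).aemeasurable_fst)
    fun j => (Polynomial.continuous _).aestronglyMeasurable]
  exact prod_congr rfl fun j _ =>
    ((hident j).comp (Polynomial.continuous (fiberProd w q j)).measurable).integral_eq

theorem integrable_prod_eval_comp (hindep : iIndepFun z μ)
    (hident : ∀ j, IdentDistrib (z j) Y μ μ) (hY : AEMeasurable Y μ)
    (hmom : ∀ k : ℕ, Integrable (fun ω => |Y ω| ^ k) μ) (w : κ → ι) (q : κ → ℝ[X]) :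
    Integrable (fun ω => ∏ a, (q a).eval (z (w a) ω)) μ := by
  have hcomp : iIndepFun (fun j ω => (fiberProd w q j).eval (z j ω)) μ :=
    hindep.comp (fun j x => (fiberProd w q j).eval x) fun j => (Polynomial.continuous _).measurable
  have hint (j : ι) : Integrable (fun ω => (fiberProd w q j).eval (z j ω)) μ :=
    ((hident j).comp (Polynomial.continuous _).measurable).integrable_iff.mpr
      (integrable_eval_of_integrable_abs_pow hY hmom _)
  convert hcomp.integrable_finsetProd hint univ using 1
  ext ω
  rw [prod_eval_comp_eq_prod_eval_fiberProd w q (z · ω), Finset.prod_apply]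

theorem integral_prod_eval_comp_eq_zero (hindep : iIndepFun z μ)
    (hident : ∀ j, IdentDistrib (z j) Y μ μ) {q : κ → ℝ[X]}
    (hq : ∀ a, ∫ ω, (q a).eval (Y ω) ∂μ = 0) {w : κ → ι} (hw : ∃ j, #{a | w a = j} = 1) :
    ∫ ω, ∏ a, (q a).eval (z (w a) ω) ∂μ = 0 := by
  obtain ⟨j, hj⟩ := hw
  obtain ⟨a, ha⟩ := card_eq_one.mp hj
  rw [integral_prod_eval_comp_eq hindep hident]
  refine prod_eq_zero (mem_univ j) ?_
  rw [fiberProd, ha, prod_singleton, hq a]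

theorem abs_integral_prod_eval_comp_le (hindep : iIndepFun z μ)
    (hident : ∀ j, IdentDistrib (z j) Y μ μ) (hY : AEMeasurable Y μ)
    (hmom : ∀ k : ℕ, Integrable (fun ω => |Y ω| ^ k) μ) {q : κ → ℝ[X]} {P : ℝ[X]}
    (hqP : ∀ a y, |(q a).eval y| ≤ P.eval y) (hP : ∀ y, 1 ≤ P.eval y) {w : κ → ι}
    (hw : ∀ j, #{a | w a = j} ≠ 1) :
    |∫ ω, ∏ a, (q a).eval (z (w a) ω) ∂μ| ≤
      (∫ ω, (P ^ Fintype.card κ).eval (Y ω) ∂μ) ^ (Fintype.card κ / 2) := by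
  have := hindep.isProbabilityMeasure
  set K := ∫ ω, (P ^ Fintype.card κ).eval (Y ω) ∂μ
  have hK (j : ι) : |∫ ω, (fiberProd w q j).eval (Y ω) ∂μ| ≤ K := by
    simpa only [Real.norm_eq_abs] using
      norm_integral_le_of_norm_le (f := fun ω => (fiberProd w q j).eval (Y ω))
        (integrable_eval_of_integrable_abs_pow hY hmom _) (ae_of_all _ fun ω => by
          rw [Real.norm_eq_abs]; exact abs_eval_fiberProd_le hqP hP w j (Y ω))
  have hoff (j : ι) (hj : j ∉ univ.image w) : |∫ ω, (fiberProd w q j).eval (Y ω) ∂μ| = 1 := by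
    rw [fiberProd_eq_one_of_notMem_image hj]
    simp
  rw [integral_prod_eval_comp_eq hindep hident, abs_prod,
    ← prod_subset (subset_univ _) fun j _ hj => hoff j hj]
  calc ∏ j ∈ univ.image w, |∫ ω, (fiberProd w q j).eval (Y ω) ∂μ|
      ≤ ∏ _j ∈ univ.image w, K := prod_le_prod (fun _ _ => abs_nonneg _) fun j _ => hK j
    _ = K ^ #(univ.image w) := prod_const K
    _ ≤ K ^ (Fintype.card κ / 2) := by
        refine pow_le_pow_right₀ (one_le_integral_eval_pow hY hmom hP _) ?_
        have := two_mul_card_image_le_of_card_fiber_ne_one hw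
        omega

theorem sum_abs_integral_prod_eval_comp_le [DecidableEq κ] (hindep : iIndepFun z μ)
    (hident : ∀ j, IdentDistrib (z j) Y μ μ) (hY : AEMeasurable Y μ)
    (hmom : ∀ k : ℕ, Integrable (fun ω => |Y ω| ^ k) μ) {q : κ → ℝ[X]}
    (hq : ∀ a, ∫ ω, (q a).eval (Y ω) ∂μ = 0) {P : ℝ[X]}
    (hqP : ∀ a y, |(q a).eval y| ≤ P.eval y) (hP : ∀ y, 1 ≤ P.eval y)
    (hr : Fintype.card κ / 2 ≤ Fintype.card ι) :
    ∑ w : κ → ι, |∫ ω, ∏ a, (q a).eval (z (w a) ω) ∂μ| ≤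
      (Fintype.card ι).choose (Fintype.card κ / 2) * (Fintype.card κ / 2 : ℕ) ^ Fintype.card κ *
        (∫ ω, (P ^ Fintype.card κ).eval (Y ω) ∂μ) ^ (Fintype.card κ / 2) := by
  have := hindep.isProbabilityMeasure
  set r := Fintype.card κ / 2
  set K := ∫ ω, (P ^ Fintype.card κ).eval (Y ω) ∂μ
  set G : Finset (κ → ι) := {w | ∀ j, #{a | w a = j} ≠ 1}
  have hG : G ⊆ ({w | #(univ.image w) ≤ r} : Finset (κ → ι)) := fun w hw =>
    mem_filter.mpr ⟨mem_univ _, by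
      have := two_mul_card_image_le_of_card_fiber_ne_one (mem_filter.mp hw).2
      omega⟩
  have hK : 0 ≤ K := zero_le_one.trans (one_le_integral_eval_pow hY hmom hP _)
  calc ∑ w : κ → ι, |∫ ω, ∏ a, (q a).eval (z (w a) ω) ∂μ|
      = ∑ w ∈ G, |∫ ω, ∏ a, (q a).eval (z (w a) ω) ∂μ| := by
        refine (sum_subset (subset_univ G) fun w _ hw => ?_).symm
        rw [integral_prod_eval_comp_eq_zero hindep hident hq (by simpa [G] using hw), abs_zero]
    _ ≤ ∑ _w ∈ G, K ^ r := sum_le_sum fun w hw =>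
        abs_integral_prod_eval_comp_le hindep hident hY hmom hqP hP (mem_filter.mp hw).2
    _ = #G * K ^ r := by rw [sum_const, nsmul_eq_mul]
    _ ≤ ((Fintype.card ι).choose r * r ^ Fintype.card κ : ℕ) * K ^ r := by
        gcongr
        exact (card_le_card hG).trans (card_filter_card_image_le hr)
    _ = _ := by rw [Nat.cast_mul, Nat.cast_pow]

theorem integral_sum_prod_eval_pow_le (hindep : iIndepFun z μ)
    (hident : ∀ j, IdentDistrib (z j) Y μ μ) (hY : AEMeasurable Y μ)
    (hmom : ∀ k : ℕ, Integrable (fun ω => |Y ω| ^ k) μ) {d : ℕ} {p : Fin d → ℝ[X]}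
    (hp : ∀ i, ∫ ω, (p i).eval (Y ω) ∂μ = 0) {P : ℝ[X]}
    (hpP : ∀ i y, |(p i).eval y| ≤ P.eval y) (hP : ∀ y, 1 ≤ P.eval y)
    (A : Finset (Fin d → ι)) (L : ℕ) (hL : L * d / 2 ≤ Fintype.card ι) :
    Integrable (fun ω => (∑ f ∈ A, ∏ i, (p i).eval (z (f i) ω)) ^ L) μ ∧
      ∫ ω, (∑ f ∈ A, ∏ i, (p i).eval (z (f i) ω)) ^ L ∂μ ≤
        (Fintype.card ι).choose (L * d / 2) * (L * d / 2 : ℕ) ^ (L * d) *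
          (∫ ω, (P ^ (L * d)).eval (Y ω) ∂μ) ^ (L * d / 2) := by
  have hκ : Fintype.card (Fin L × Fin d) = L * d := by simp
  simp_rw [fun ω => sum_prod_pow_eq_sum_piFinset (fun i j => (p i).eval (z j ω)) A L]
  have hint (g : Fin L → Fin d → ι) :
      Integrable (fun ω => ∏ a : Fin L × Fin d, (p a.2).eval (z (g a.1 a.2) ω)) μ :=
    integrable_prod_eval_comp hindep hident hY hmom (fun a : Fin L × Fin d => g a.1 a.2)
      fun a => p a.2
  have hsum := sum_abs_integral_prod_eval_comp_le hindep hident hY hmom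
    (q := fun a : Fin L × Fin d => p a.2) (fun a : Fin L × Fin d => hp a.2)
    (fun a : Fin L × Fin d => hpP a.2) hP (by rwa [hκ])
  rw [hκ] at hsum
  refine ⟨integrable_finsetSum _ fun g _ => hint g, ?_⟩
  rw [integral_finsetSum _ fun g _ => hint g]
  calc ∑ g ∈ Fintype.piFinset (fun _ : Fin L => A),
        ∫ ω, ∏ a : Fin L × Fin d, (p a.2).eval (z (g a.1 a.2) ω) ∂μ
      ≤ ∑ g : Fin L → Fin d → ι, |∫ ω, ∏ a : Fin L × Fin d, (p a.2).eval (z (g a.1 a.2) ω) ∂μ| :=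
        (sum_le_sum fun _ _ => le_abs_self _).trans
          (sum_le_sum_of_subset_of_nonneg (subset_univ _) fun _ _ _ => abs_nonneg _)
    _ = ∑ w : Fin L × Fin d → ι, |∫ ω, ∏ a, (p a.2).eval (z (w a) ω) ∂μ| :=
        Fintype.sum_equiv (Equiv.curry _ _ _).symm _ _ fun _ => rfl
    _ ≤ _ := hsum

end Moments

theorem abs_eval_le_eval_one_add_sum_sq {δ : Type*} [Fintype δ] (p : δ → ℝ[X]) (i : δ)
    (y : ℝ) : |(p i).eval y| ≤ (1 + ∑ k, p k ^ 2).eval y := by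
  have hsq : (p i).eval y ^ 2 ≤ ∑ k, (p k).eval y ^ 2 :=
    single_le_sum (fun k _ => sq_nonneg ((p k).eval y)) (mem_univ i)
  simp only [eval_add, eval_one, eval_finsetSum, eval_pow]
  nlinarith [sq_abs ((p i).eval y), sq_nonneg (|(p i).eval y| - 1)]

theorem one_le_eval_one_add_sum_sq {δ : Type*} [Fintype δ] (p : δ → ℝ[X]) (y : ℝ) :
    1 ≤ (1 + ∑ k, p k ^ 2).eval y := by
  simp only [eval_add, eval_one, eval_finsetSum, eval_pow]
  linarith [sum_nonneg fun k (_ : k ∈ univ) => sq_nonneg ((p k).eval y)]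

theorem rpow_neg_half_pow_mul_choose_le_one {n : ℕ} (hn : 0 < n) (d m : ℕ) :
    ((n : ℝ) ^ (-(d : ℝ) / 2)) ^ (2 * m) * n.choose (m * d) ≤ 1 := by
  have hn' : (0 : ℝ) < n := Nat.cast_pos.mpr hn
  rw [← Real.rpow_mul_natCast hn'.le]
  calc (n : ℝ) ^ (-(d : ℝ) / 2 * (2 * m : ℕ)) * n.choose (m * d)
      ≤ (n : ℝ) ^ (-(d : ℝ) / 2 * (2 * m : ℕ)) * (n : ℝ) ^ ((m * d : ℕ) : ℝ) := by
        rw [Real.rpow_natCast]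
        gcongr
        exact_mod_cast Nat.choose_le_pow n (m * d)
    _ = 1 := by
        rw [← Real.rpow_add hn',
          show -(d : ℝ) / 2 * (2 * m : ℕ) + (m * d : ℕ) = 0 by push_cast; ring, Real.rpow_zero]

theorem exists_integral_rpow_neg_half_mul_abs_sum_pow_le {Ω : Type*} [MeasurableSpace Ω]
    {μ : Measure Ω} {z : ℕ → Ω → ℝ} (hmeas : ∀ j, Measurable (z j)) (hindep : iIndepFun z μ)
    (hident : ∀ j, μ.map (z j) = μ.map (z 0))
    (hmom : ∀ k : ℕ, Integrable (fun ω => |z 0 ω| ^ k) μ) {d : ℕ} {p : Fin d → ℝ[X]}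
    (hp : ∀ i, ∫ ω, (p i).eval (z 0 ω) ∂μ = 0) (m : ℕ) :
    ∃ C : ℝ, ∀ n : ℕ, 0 < n → m * d ≤ n → ∀ A : Finset (Fin d → Fin n),
      Integrable (fun ω =>
        ((n : ℝ) ^ (-(d : ℝ) / 2) * |∑ f ∈ A, ∏ i, (p i).eval (z (f i) ω)|) ^ (2 * m)) μ ∧
      ∫ ω, ((n : ℝ) ^ (-(d : ℝ) / 2) * |∑ f ∈ A, ∏ i, (p i).eval (z (f i) ω)|) ^ (2 * m) ∂μ
        ≤ C := by
  have := hindep.isProbabilityMeasure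
  set P : ℝ[X] := 1 + ∑ i, p i ^ 2
  set K := ∫ ω, (P ^ (2 * m * d)).eval (z 0 ω) ∂μ
  have hK : 0 ≤ K :=
    zero_le_one.trans (one_le_integral_eval_pow (hmeas 0).aemeasurable hmom
      (one_le_eval_one_add_sum_sq p) _)
  refine ⟨((m * d : ℕ) : ℝ) ^ (2 * m * d) * K ^ (m * d), fun n hn hmd A => ?_⟩
  have hL : 2 * m * d / 2 = m * d := by rw [mul_assoc]; exact Nat.mul_div_cancel_left _ two_pos
  obtain ⟨hint, hle⟩ := integral_sum_prod_eval_pow_le (z := fun j : Fin n => z j)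
    (hindep.precomp Fin.val_injective)
    (fun j => ⟨(hmeas j).aemeasurable, (hmeas 0).aemeasurable, hident j⟩)
    (hmeas 0).aemeasurable hmom hp (abs_eval_le_eval_one_add_sum_sq p)
    (one_le_eval_one_add_sum_sq p) A (2 * m) (by rwa [hL, Fintype.card_fin])
  rw [hL, Fintype.card_fin] at hle
  set c := (n : ℝ) ^ (-(d : ℝ) / 2)
  have hpow (x : ℝ) : (c * |x|) ^ (2 * m) = c ^ (2 * m) * x ^ (2 * m) := by
    rw [mul_pow, (even_two_mul m).pow_abs]
  simp_rw [hpow]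
  refine ⟨hint.const_mul _, ?_⟩
  rw [integral_const_mul]
  calc c ^ (2 * m) * ∫ ω, (∑ f ∈ A, ∏ i, (p i).eval (z (f i) ω)) ^ (2 * m) ∂μ
      ≤ c ^ (2 * m) * (n.choose (m * d) * ((m * d : ℕ) : ℝ) ^ (2 * m * d) * K ^ (m * d)) := by
        gcongr
    _ = (c ^ (2 * m) * n.choose (m * d)) * (((m * d : ℕ) : ℝ) ^ (2 * m * d) * K ^ (m * d)) := by
        ring
    _ ≤ ((m * d : ℕ) : ℝ) ^ (2 * m * d) * K ^ (m * d) :=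
        mul_le_of_le_one_left (by positivity) (rpow_neg_half_pow_mul_choose_le_one hn d m)

theorem toReal_measure_lt_le_integral_pow_div {Ω : Type*} [MeasurableSpace Ω] {μ : Measure Ω}
    [IsFiniteMeasure μ] {X : Ω → ℝ} (hX : ∀ ω, 0 ≤ X ω) {t : ℝ} (ht : 0 < t) (k : ℕ)
    (hint : Integrable (fun ω => X ω ^ k) μ) :
    (μ {ω | t < X ω}).toReal ≤ (∫ ω, X ω ^ k ∂μ) / t ^ k := by
  have hsub : {ω | t < X ω} ⊆ {ω | t ^ k ≤ X ω ^ k} := fun ω hω =>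
    pow_le_pow_left₀ ht.le (le_of_lt hω) k
  rw [le_div_iff₀ (pow_pos ht k), mul_comm]
  calc t ^ k * (μ {ω | t < X ω}).toReal ≤ t ^ k * μ.real {ω | t ^ k ≤ X ω ^ k} :=
        mul_le_mul_of_nonneg_left (measureReal_mono hsub) (by positivity)
    _ ≤ ∫ ω, X ω ^ k ∂μ :=
        mul_meas_ge_le_integral_of_nonneg (ae_of_all _ fun ω => pow_nonneg (hX ω) k) hint _

theorem eventually_div_rpow_lt_rpow_neg {a b : ℝ} (hab : b < a) (C : ℝ) :
    ∀ᶠ n : ℕ in atTop, C / (n : ℝ) ^ a < (n : ℝ) ^ (-b) := by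
  have htend : Tendsto (fun n : ℕ => (n : ℝ) ^ (a - b)) atTop atTop :=
    (tendsto_rpow_atTop (sub_pos.mpr hab)).comp tendsto_natCast_atTop_atTop
  filter_upwards [htend.eventually_gt_atTop C, eventually_gt_atTop 0] with n hC hn
  have hn' : (0 : ℝ) < n := Nat.cast_pos.mpr hn
  rwa [div_lt_iff₀ (Real.rpow_pos_of_pos hn' a), ← Real.rpow_add hn', neg_add_eq_sub]

theorem stmt2_general {Ω : Type*} [MeasureSpace Ω] [IsProbabilityMeasure (ℙ : Measure Ω)]
    (z : ℕ → Ω → ℝ) (hmeas : ∀ j, Measurable (z j))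
    (hindep : iIndepFun z ℙ)
    (hident : ∀ j, Measure.map (z j) ℙ = Measure.map (z 0) ℙ)
    (hmom : ∀ k : ℕ, Integrable (fun ω => |z 0 ω| ^ k) ℙ)
    (d : ℕ) (p : Fin d → Polynomial ℝ)
    (hp : ∀ i, (∫ ω, (p i).eval (z 0 ω)) = 0) :
    ∀ α > (0:ℝ), ∀ β > (0:ℝ), ∃ N : ℕ, ∀ n ≥ N,
      (ℙ {ω | (n : ℝ) ^ α <
          (n : ℝ) ^ (-(d : ℝ) / 2) *
            |∑ f ∈ Finset.univ.filter (fun f : Fin d → Fin n => Function.Injective f),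
              ∏ i, (p i).eval (z (f i) ω)|}).toReal < (n : ℝ) ^ (-β) := by
  intro α hα β hβ
  obtain ⟨m, hm⟩ := exists_nat_gt (β / α)
  have hβm : β < α * (2 * m : ℕ) := by
    rw [div_lt_iff₀ hα] at hm
    have : 0 ≤ (m : ℝ) * α := by positivity
    push_cast
    linarith
  obtain ⟨C, hC⟩ :=
    exists_integral_rpow_neg_half_mul_abs_sum_pow_le hmeas hindep hident hmom hp m
  obtain ⟨N, hN⟩ := eventually_atTop.mp ((eventually_div_rpow_lt_rpow_neg hβm C).and
    ((eventually_gt_atTop 0).and (eventually_ge_atTop (m * d))))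
  refine ⟨N, fun n hn => ?_⟩
  obtain ⟨hlt, hn0, hmd⟩ := hN n hn
  obtain ⟨hint, hle⟩ := hC n hn0 hmd (univ.filter fun f => Function.Injective f)
  calc _ ≤ _ :=
        toReal_measure_lt_le_integral_pow_div (fun ω => by positivity) (by positivity) _ hint
    _ ≤ C / (n : ℝ) ^ (α * (2 * m : ℕ)) := by
        rw [Real.rpow_mul_natCast (Nat.cast_nonneg n)]
        gcongr
    _ < _ := hlt

theorem stmt2 {Ω : Type*} [MeasureSpace Ω] [IsProbabilityMeasure (ℙ : Measure Ω)]
    (z : ℕ → Ω → ℝ) (hmeas : ∀ j, Measurable (z j))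
    (hindep : iIndepFun z ℙ)
    (hident : ∀ j, Measure.map (z j) ℙ = Measure.map (z 0) ℙ)
    (hmom : ∀ k : ℕ, Integrable (fun ω => |z 0 ω| ^ k) ℙ)
    (hmean : (∫ ω, z 0 ω) = 0) (hvar : (∫ ω, (z 0 ω) ^ 2) = 1)
    (d : ℕ) (p : Fin d → Polynomial ℝ)
    (hp : ∀ i, (∫ ω, (p i).eval (z 0 ω)) = 0) :
    ∀ α > (0:ℝ), ∀ β > (0:ℝ), ∃ N : ℕ, ∀ n ≥ N,
      (ℙ {ω | (n : ℝ) ^ α <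
          (n : ℝ) ^ (-(d : ℝ) / 2) *
            |∑ f ∈ Finset.univ.filter (fun f : Fin d → Fin n => Function.Injective f),
              ∏ i, (p i).eval (z (f i) ω)|}).toReal < (n : ℝ) ^ (-β) :=
  stmt2_general z hmeas hindep hident hmom d p hp
end

section
/- Let x ∈ ℝ^p with ‖x‖₂ < 1 and m = ⌈log₂ p⌉. Define y ∈ ℝ^p by y_i = 2^{−l/2} sign(x_i) if 2^{−l} ≤ x_i² < 2^{−l+1} for some integer 0 ≤ l ≤ m+3, and y_i = 0 if x_i² < 2^{−m−3}. Then ‖y‖₂ ≤ ‖x‖₂ < 1 and ‖x − y‖₂ < 9/20. -/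
/-!
Write `c = (1 - 1/√2)²`. A coordinate with `2⁻ˡ ≤ xᵢ² < 2·2⁻ˡ` is replaced by `±2^(-l/2)`, which has
the same sign and lies between `|xᵢ|/√2` and `|xᵢ|`, so its error is at most `c xᵢ²`. A coordinate
below the threshold `τ = 2^-(m+3)` is replaced by `0`, with error `xᵢ² = c xᵢ² + (1 - c) min(xᵢ², τ)`.
Summing, the squared error is at most `c ‖x‖² + (1 - c) p τ < c + (1 - c)/8 < (9/20)²`, because
`p ≤ 2^m`; the cruder bound `c ‖x‖² + p τ` would exceed `(9/20)²`.
-/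

open Finset Real

lemma exists_dyadic_band {t : ℝ} (ht : t < 2) :
    ∀ {N : ℕ}, ((2:ℝ) ^ N)⁻¹ ≤ t → ∃ l ≤ N, ((2:ℝ) ^ l)⁻¹ ≤ t ∧ t < 2 * ((2:ℝ) ^ l)⁻¹
  | 0, h => ⟨0, le_rfl, h, by simpa using ht⟩
  | N + 1, h => by
    by_cases hN : ((2:ℝ) ^ N)⁻¹ ≤ t
    · obtain ⟨l, hl, hband⟩ := exists_dyadic_band ht hN
      exact ⟨l, hl.trans N.le_succ, hband⟩
    · refine ⟨N + 1, le_rfl, h, ?_⟩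
      calc t < ((2:ℝ) ^ N)⁻¹ := not_le.1 hN
        _ = 2 * ((2:ℝ) ^ (N + 1))⁻¹ := by rw [pow_succ]; field_simp

lemma sub_sq_le_of_le_of_le_mul {a r k : ℝ} (hk : 0 < k) (hr : r ≤ a) (ha : a ≤ k * r) :
    (a - r) ^ 2 ≤ (1 - 1 / k) ^ 2 * a ^ 2 := by
  have hdiv : a / k ≤ r := (div_le_iff₀ hk).2 (by linarith)
  have hsub : a - r ≤ (1 - 1 / k) * a := by
    calc a - r ≤ a - a / k := by linarith
      _ = (1 - 1 / k) * a := by ring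
  calc (a - r) ^ 2 ≤ ((1 - 1 / k) * a) ^ 2 := pow_le_pow_left₀ (sub_nonneg.2 hr) hsub 2
    _ = (1 - 1 / k) ^ 2 * a ^ 2 := mul_pow _ _ 2

lemma mul_sign_sq {a : ℝ} (ha : a ≠ 0) (r : ℝ) : (r * sign a) ^ 2 = r ^ 2 := by
  rcases ha.lt_or_gt with h | h
  · rw [sign_of_neg h]; ring
  · rw [sign_of_pos h]; ring

lemma sub_mul_sign_sq {a : ℝ} (ha : a ≠ 0) (r : ℝ) : (a - r * sign a) ^ 2 = (|a| - r) ^ 2 := by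
  rcases ha.lt_or_gt with h | h
  · rw [sign_of_neg h, abs_of_neg h]; ring
  · rw [sign_of_pos h, abs_of_pos h]; ring

lemma sub_sqrt_mul_sign_sq_le {a b : ℝ} (hb : b ≤ a ^ 2) (hb2 : a ^ 2 < 2 * b) :
    (a - √b * sign a) ^ 2 ≤ (1 - 1 / √2) ^ 2 * a ^ 2 := by
  have ha : a ≠ 0 := by rintro rfl; linarith
  rw [sub_mul_sign_sq ha, ← sq_abs a]
  refine sub_sq_le_of_le_of_le_mul (by positivity) ?_ ?_
  · exact (sqrt_le_sqrt hb).trans_eq (sqrt_sq_eq_abs a)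
  · rw [← sqrt_mul zero_le_two, ← sqrt_sq_eq_abs]
    exact (sqrt_lt_sqrt (sq_nonneg a) hb2).le

lemma dyadic_rounding_coord_le {a y : ℝ} {N : ℕ} (ha : a ^ 2 < 2)
    (hy0 : a ^ 2 < ((2:ℝ) ^ N)⁻¹ → y = 0)
    (hyl : ∀ l : ℕ, l ≤ N → ((2:ℝ) ^ l)⁻¹ ≤ a ^ 2 → a ^ 2 < 2 * ((2:ℝ) ^ l)⁻¹ →
      y = √(((2:ℝ) ^ l)⁻¹) * sign a) :
    y ^ 2 ≤ a ^ 2 ∧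
      (a - y) ^ 2 ≤ (1 - 1 / √2) ^ 2 * a ^ 2 +
        (1 - (1 - 1 / √2) ^ 2) * min (a ^ 2) ((2:ℝ) ^ N)⁻¹ := by
  have hc1 : (1 - 1 / √2) ^ 2 ≤ 1 := by
    have : 1 / √2 ≤ 1 := by rw [div_le_one (by positivity)]; exact one_le_sqrt.2 one_le_two
    nlinarith [show 0 ≤ 1 / √2 by positivity]
  by_cases hsmall : a ^ 2 < ((2:ℝ) ^ N)⁻¹
  · rw [hy0 hsmall, min_eq_left hsmall.le]
    constructor <;> nlinarith [sq_nonneg a]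
  · obtain ⟨l, hl, hlow, hhigh⟩ := exists_dyadic_band ha (not_lt.1 hsmall)
    have ha0 : a ≠ 0 := by rintro rfl; linarith [show (0:ℝ) < ((2:ℝ) ^ l)⁻¹ by positivity]
    rw [hyl l hl hlow hhigh]
    refine ⟨?_, ?_⟩
    · rwa [mul_sign_sq ha0, sq_sqrt (by positivity)]
    · have : 0 ≤ (1 - (1 - 1 / √2) ^ 2) * min (a ^ 2) ((2:ℝ) ^ N)⁻¹ :=
        mul_nonneg (by linarith) (le_min (sq_nonneg a) (by positivity))
      linarith [sub_sqrt_mul_sign_sq_le hlow hhigh]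

lemma sum_min_le_card_mul {ι : Type*} [Fintype ι] (f : ι → ℝ) (τ : ℝ) :
    ∑ i, min (f i) τ ≤ Fintype.card ι * τ := by
  calc ∑ i, min (f i) τ ≤ ∑ _i : ι, τ := sum_le_sum fun i _ => min_le_right _ _
    _ = Fintype.card ι * τ := by rw [sum_const, card_univ, nsmul_eq_mul]

lemma card_mul_inv_two_pow_clog_add_three_le (p : ℕ) :
    (p : ℝ) * ((2:ℝ) ^ (Nat.clog 2 p + 3))⁻¹ ≤ 1 / 8 := by
  have hp : (p : ℝ) ≤ 2 ^ Nat.clog 2 p := by exact_mod_cast Nat.le_pow_clog one_lt_two p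
  calc (p : ℝ) * ((2:ℝ) ^ (Nat.clog 2 p + 3))⁻¹
      ≤ 2 ^ Nat.clog 2 p * ((2:ℝ) ^ (Nat.clog 2 p + 3))⁻¹ := by gcongr
    _ = 1 / 8 := by rw [pow_add]; field_simp; norm_num

lemma one_sub_inv_sqrt_two_sq_lt : (1 - 1 / √2) ^ 2 < 31 / 350 := by
  have hs : (1.414 : ℝ) < √2 := by
    rw [lt_sqrt (by norm_num)]; norm_num
  have hinv : 1 / √2 = √2 / 2 := by
    field_simp; rw [sq_sqrt zero_le_two]
  rw [hinv]
  nlinarith [sq_sqrt (zero_le_two : (0:ℝ) ≤ 2)]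

theorem stmt5 (p : ℕ) (x y : Fin p → ℝ)
    (hx : Real.sqrt (∑ i, x i ^ 2) < 1)
    (m : ℕ) (hm : m = Nat.clog 2 p)
    (hy0 : ∀ i, x i ^ 2 < ((2:ℝ) ^ (m + 3))⁻¹ → y i = 0)
    (hyl : ∀ i, ∀ l : ℕ, l ≤ m + 3 → ((2:ℝ) ^ l)⁻¹ ≤ x i ^ 2 →
      x i ^ 2 < 2 * ((2:ℝ) ^ l)⁻¹ →
      y i = Real.sqrt (((2:ℝ) ^ l)⁻¹) * Real.sign (x i)) :
    Real.sqrt (∑ i, y i ^ 2) ≤ Real.sqrt (∑ i, x i ^ 2) ∧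
      Real.sqrt (∑ i, (x i - y i) ^ 2) < 9 / 20 := by
  subst hm
  set c := (1 - 1 / √2) ^ 2
  set τ := ((2:ℝ) ^ (Nat.clog 2 p + 3))⁻¹
  have hnorm : ∑ i, x i ^ 2 < 1 := by simpa using (sqrt_lt' one_pos).1 hx
  have hcoord i := dyadic_rounding_coord_le
    ((single_le_sum (fun j _ => sq_nonneg (x j)) (mem_univ i)).trans_lt (hnorm.trans one_lt_two))
    (hy0 i) (hyl i)
  refine ⟨sqrt_le_sqrt (sum_le_sum fun i _ => (hcoord i).1), ?_⟩
  have herr : ∑ i, (x i - y i) ^ 2 ≤ c * ∑ i, x i ^ 2 + (1 - c) * ∑ i, min (x i ^ 2) τ := by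
    rw [mul_sum, mul_sum, ← sum_add_distrib]
    exact sum_le_sum fun i _ => (hcoord i).2
  have hsmall : ∑ i, min (x i ^ 2) τ ≤ 1 / 8 := by
    calc ∑ i, min (x i ^ 2) τ ≤ p * τ := by simpa using sum_min_le_card_mul (fun i => x i ^ 2) τ
      _ ≤ 1 / 8 := card_mul_inv_two_pow_clog_add_three_le p
  have hc : c < 31 / 350 := one_sub_inv_sqrt_two_sq_lt
  have hc0 : 0 ≤ c := by positivity
  rw [sqrt_lt' (by norm_num)]
  nlinarith [mul_le_mul_of_nonneg_left hnorm.le hc0,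
    mul_le_mul_of_nonneg_left hsmall (show 0 ≤ 1 - c by linarith)]
end

section
/- Let m = ⌈log₂ p⌉ and let D₂^p be the set of y ∈ ℝ^p with ‖y‖₂ ≤ 1 and each y_i² ∈ {0, 1, 2^{−1}, ..., 2^{−(m+3)}}. For 0 ≤ l ≤ m+3 let π_l(y) be y with all coordinates of squared magnitude less than 2^{−l} set to zero. Then there is an absolute constant C > 0 such that log |{π_l(y) : y ∈ D₂^p}| ≤ C (m + 4 − l) 2^l for all 0 ≤ l ≤ m + 3. -/
/-!
A vector `z = π_l y` has `∑ zᵢ² ≤ 1`, and each nonzero coordinate equals `±2^{-j/2}` for some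
`j ≤ l`. Hence `z` is determined by its level sets at these `2(l+1)` values, and the level set
at `±2^{-j/2}` has at most `2^j` elements. Comparing with `∑ₛ x^{|s|} = (1 + x)^p` at
`x = n/(p + n)` shows that a `p`-set has at most `(e(p + n)/n)^n` subsets of size at most `n`.
With `p ≤ 2^m` this gives `log |π_l(D₂^p)| ≤ 2 ∑_{j ≤ l} 2^j (m + 5 - j) ≤ 12 (m + 4 - l) 2^l`.
-/

/-- Latala's dyadic net: unit vectors whose squared coordinates lie in
`{0, 1, 2⁻¹, ..., 2^{-(m+3)}}`, with `m = ⌈log₂ p⌉`. -/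
def latalaNet (p : ℕ) : Set (Fin p → ℝ) :=
  {y | Real.sqrt (∑ i, y i ^ 2) ≤ 1 ∧
    ∀ i, y i ^ 2 = 0 ∨ ∃ j : ℕ, j ≤ Nat.clog 2 p + 3 ∧ y i ^ 2 = ((2:ℝ) ^ j)⁻¹}

/-- `π_l` zeroes out all coordinates with squared value less than `2^{-l}`. -/
noncomputable def latalaProj (p l : ℕ) (y : Fin p → ℝ) : Fin p → ℝ :=
  fun i => if ((2:ℝ) ^ l)⁻¹ ≤ y i ^ 2 then y i else 0

open Finset

theorem card_filter_card_le_mul_pow_le {ι : Type*} [Fintype ι] (n : ℕ) {x : ℝ}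
    (hx₀ : 0 ≤ x) (hx₁ : x ≤ 1) :
    (#{s : Finset ι | s.card ≤ n} : ℝ) * x ^ n ≤ (1 + x) ^ Fintype.card ι := by
  classical
  calc (#{s : Finset ι | s.card ≤ n} : ℝ) * x ^ n
      = ∑ s : Finset ι with s.card ≤ n, x ^ n := by rw [sum_const, nsmul_eq_mul]
    _ ≤ ∑ s : Finset ι with s.card ≤ n, x ^ s.card :=
        sum_le_sum fun s hs => pow_le_pow_of_le_one hx₀ hx₁ (mem_filter.1 hs).2
    _ ≤ ∑ s : Finset ι, x ^ s.card :=
        sum_le_sum_of_subset_of_nonneg (filter_subset _ _) fun _ _ _ => by positivity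
    _ = (1 + x) ^ Fintype.card ι := by
        simpa [add_comm] using Fintype.sum_pow_mul_eq_add_pow ι x 1

theorem log_card_filter_card_le_le {ι : Type*} [Fintype ι] {n : ℕ} (hn : 0 < n) :
    Real.log #{s : Finset ι | s.card ≤ n} ≤
      n * (1 + Real.log ((Fintype.card ι + n) / n)) := by
  set N : ℝ := (Fintype.card ι : ℝ)
  have hn' : (0 : ℝ) < n := by exact_mod_cast hn
  set x : ℝ := n / (N + n)
  have hx₀ : 0 < x := by positivity
  have hx₁ : x ≤ 1 := div_le_one_of_le₀ (by simp [N]) (by positivity)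
  have hpos : (0 : ℝ) < #{s : Finset ι | s.card ≤ n} := by
    exact_mod_cast card_pos.2 ⟨∅, by simp⟩
  have hbound := card_filter_card_le_mul_pow_le (ι := ι) n hx₀.le hx₁
  have hexp : (1 + x) ^ Fintype.card ι ≤ Real.exp n := by
    calc (1 + x) ^ Fintype.card ι ≤ Real.exp x ^ Fintype.card ι := by
          gcongr; linarith [Real.add_one_le_exp x]
      _ = Real.exp (N * x) := by rw [← Real.exp_nat_mul]
      _ ≤ Real.exp n := by
          gcongr
          rw [mul_div_assoc']
          exact div_le_of_le_mul₀ (by positivity) hn'.le (by nlinarith)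
  have := Real.log_le_log (by positivity) (hbound.trans hexp)
  rw [Real.log_mul hpos.ne' (by positivity), Real.log_pow, Real.log_exp] at this
  have hxinv : Real.log ((N + n) / n) = - Real.log x := by
    rw [← Real.log_inv, inv_div]
  rw [hxinv]
  linarith

theorem Real.log_natCast_le_log_natCast {a b : ℕ} (h : a ≤ b) : Real.log a ≤ Real.log b := by
  rcases Nat.eq_zero_or_pos a with rfl | ha
  · simpa using Real.log_natCast_nonneg b
  · exact Real.log_le_log (by exact_mod_cast ha) (by exact_mod_cast h)

theorem sum_range_two_pow_mul_sub (c : ℝ) (l : ℕ) :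
    ∑ j ∈ range (l + 1), (2 : ℝ) ^ j * (c - j) + c + 2 = 2 ^ (l + 1) * (c + 1 - l) := by
  induction l with
  | zero => simp only [zero_add, sum_range_one, pow_zero, pow_one, Nat.cast_zero]; ring
  | succ l ih =>
    rw [sum_range_succ]
    push_cast
    linear_combination ih

def valueFibers {ι κ α : Type*} [Fintype ι] [DecidableEq α] (v : κ → α) (z : ι → α) (k : κ) :
    Finset ι :=
  {i | z i = v k}

theorem injOn_valueFibers {ι κ α : Type*} [Fintype ι] [DecidableEq α] (v : κ → α) (a : α) :
    Set.InjOn (valueFibers (ι := ι) v) {z | ∀ i, z i = a ∨ ∃ k, z i = v k} := by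
  have key : ∀ z w : ι → α, valueFibers v z = valueFibers v w → ∀ i k, z i = v k → w i = z i :=
    fun z w h i k hk => by
      have : i ∈ valueFibers v w k := h ▸ by simpa [valueFibers] using hk
      simp only [valueFibers, mem_filter, mem_univ, true_and] at this
      rw [this, hk]
  intro z hz w hw h
  funext i
  rcases hz i with hza | ⟨k, hk⟩
  · rcases hw i with hwa | ⟨k, hk⟩
    · rw [hza, hwa]
    · exact key w z h.symm i k hk
  · exact (key z w h i k hk).symm

theorem card_filter_eq_mul_sq_le_sum_sq {ι : Type*} [Fintype ι] (z : ι → ℝ) (c : ℝ) :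
    (#{i | z i = c} : ℝ) * c ^ 2 ≤ ∑ i, z i ^ 2 := by
  calc (#{i | z i = c} : ℝ) * c ^ 2 = ∑ i with z i = c, z i ^ 2 := by
        rw [sum_congr rfl fun i hi => by rw [(mem_filter.1 hi).2], sum_const, nsmul_eq_mul]
    _ ≤ ∑ i, z i ^ 2 :=
        sum_le_sum_of_subset_of_nonneg (filter_subset _ _) fun _ _ _ => sq_nonneg _

noncomputable def signedDyadic (j : ℕ) (b : Bool) : ℝ :=
  (if b then 1 else -1) * √((2 : ℝ) ^ j)⁻¹

theorem signedDyadic_sq (j : ℕ) (b : Bool) : signedDyadic j b ^ 2 = ((2 : ℝ) ^ j)⁻¹ := by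
  cases b <;> simp [signedDyadic]

theorem exists_signedDyadic_of_sq_eq {x : ℝ} {j : ℕ} (h : x ^ 2 = ((2 : ℝ) ^ j)⁻¹) :
    ∃ b, x = signedDyadic j b := by
  rw [← signedDyadic_sq j true, sq_eq_sq_iff_eq_or_eq_neg] at h
  rcases h with h | h
  · exact ⟨true, h⟩
  · exact ⟨false, by simp [h, signedDyadic]⟩

section LatalaNet

variable {p l : ℕ} {z : Fin p → ℝ}

theorem sum_sq_le_one_of_mem_latalaNet {y : Fin p → ℝ} (hy : y ∈ latalaNet p) :
    ∑ i, y i ^ 2 ≤ 1 :=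
  Real.sqrt_le_one.1 hy.1

theorem sum_sq_latalaProj_le (y : Fin p → ℝ) : ∑ i, latalaProj p l y i ^ 2 ≤ ∑ i, y i ^ 2 :=
  sum_le_sum fun i _ => by unfold latalaProj; split_ifs <;> simp [sq_nonneg]

theorem sum_sq_le_one_of_mem_image (hz : z ∈ latalaProj p l '' latalaNet p) :
    ∑ i, z i ^ 2 ≤ 1 := by
  obtain ⟨y, hy, rfl⟩ := hz
  exact (sum_sq_latalaProj_le y).trans (sum_sq_le_one_of_mem_latalaNet hy)

theorem eq_zero_or_eq_signedDyadic_of_mem_image (hz : z ∈ latalaProj p l '' latalaNet p)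
    (i : Fin p) : z i = 0 ∨ ∃ k : Fin (l + 1) × Bool, z i = signedDyadic k.1 k.2 := by
  obtain ⟨y, hy, rfl⟩ := hz
  unfold latalaProj
  split_ifs with hbig
  · right
    rcases hy.2 i with h0 | ⟨j, -, hj⟩
    · exact absurd (h0 ▸ hbig) (not_le.2 (by positivity))
    · have hjl : j < l + 1 := by
        by_contra! hlj
        have : ((2 : ℝ) ^ j)⁻¹ < ((2 : ℝ) ^ l)⁻¹ := by
          gcongr
          · norm_num
          · omega
        linarith
      obtain ⟨b, hb⟩ := exists_signedDyadic_of_sq_eq hj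
      exact ⟨(⟨j, hjl⟩, b), hb⟩
  · exact Or.inl rfl

theorem ncard_image_latalaProj_le :
    (latalaProj p l '' latalaNet p).ncard ≤
      ∏ k : Fin (l + 1) × Bool, #{s : Finset (Fin p) | s.card ≤ 2 ^ (k.1 : ℕ)} := by
  set S := latalaProj p l '' latalaNet p
  set Φ := valueFibers (ι := Fin p) fun k : Fin (l + 1) × Bool => signedDyadic k.1 k.2
  have hinj : Set.InjOn Φ S := (injOn_valueFibers _ 0).mono fun z hz =>
    eq_zero_or_eq_signedDyadic_of_mem_image hz
  have hfiber : ∀ z ∈ S, ∀ k : Fin (l + 1) × Bool, (Φ z k).card ≤ 2 ^ (k.1 : ℕ) := by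
    intro z hz k
    have h := (card_filter_eq_mul_sq_le_sum_sq z (signedDyadic k.1 k.2)).trans
      (sum_sq_le_one_of_mem_image hz)
    rw [signedDyadic_sq, ← div_eq_mul_inv, div_le_one (by positivity)] at h
    exact_mod_cast h
  have hmaps : Φ '' S ⊆ Fintype.piFinset fun k : Fin (l + 1) × Bool =>
      ({s : Finset (Fin p) | s.card ≤ 2 ^ (k.1 : ℕ)} : Finset _) := by
    rintro _ ⟨z, hz, rfl⟩
    simpa using hfiber z hz
  calc S.ncard = (Φ '' S).ncard := hinj.ncard_image.symm
    _ ≤ _ := (Set.ncard_le_ncard hmaps (finite_toSet _)).trans_eq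
        (by rw [Set.ncard_coe_finset, Fintype.card_piFinset])

end LatalaNet

theorem log_card_filter_card_le_two_pow_le {p m j : ℕ} (hp : p ≤ 2 ^ m) (hj : j ≤ m + 3) :
    Real.log #{s : Finset (Fin p) | s.card ≤ 2 ^ j} ≤ 2 ^ j * ((m : ℝ) + 5 - j) := by
  have hsum : (p : ℝ) + 2 ^ j ≤ 2 ^ (m + 4) := by
    have : (p : ℝ) ≤ 2 ^ m := by exact_mod_cast hp
    have : (2 : ℝ) ^ j ≤ 2 ^ (m + 3) := pow_le_pow_right₀ one_le_two hj
    have : (2 : ℝ) ^ m ≤ 2 ^ (m + 3) := pow_le_pow_right₀ one_le_two (by omega)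
    rw [pow_succ _ (m + 3)]
    linarith
  have hratio : Real.log ((p + 2 ^ j) / 2 ^ j) ≤ (m : ℝ) + 4 - j := by
    rw [Real.log_div (by positivity) (by positivity), Real.log_pow]
    have := Real.log_le_log (by positivity) hsum
    rw [Real.log_pow] at this
    have hlog2 : Real.log 2 ≤ 1 := by linarith [Real.log_le_sub_one_of_pos (zero_lt_two' ℝ)]
    have hmj : (j : ℝ) ≤ m + 4 := by exact_mod_cast (by omega : j ≤ m + 4)
    push_cast at this
    nlinarith [Real.log_pos one_lt_two]
  have := log_card_filter_card_le_le (ι := Fin p) (Nat.two_pow_pos j)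
  simp only [Fintype.card_fin, Nat.cast_pow, Nat.cast_ofNat] at this
  linarith [mul_le_mul_of_nonneg_left hratio (by positivity : (0 : ℝ) ≤ 2 ^ j)]

theorem stmt6 : ∃ C > (0:ℝ), ∀ p : ℕ, ∀ l : ℕ, l ≤ Nat.clog 2 p + 3 →
    Real.log ((Set.ncard (latalaProj p l '' latalaNet p) : ℝ)) ≤
      C * ((Nat.clog 2 p : ℝ) + 4 - l) * 2 ^ l := by
  refine ⟨12, by norm_num, fun p l hl => ?_⟩
  set m := Nat.clog 2 p
  have hp : p ≤ 2 ^ m := Nat.le_pow_clog one_lt_two p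
  have hlm : (l : ℝ) ≤ m + 3 := by exact_mod_cast hl
  have hgeom := sum_range_two_pow_mul_sub (m + 5) l
  calc Real.log ((latalaProj p l '' latalaNet p).ncard : ℝ)
      ≤ ∑ k : Fin (l + 1) × Bool, Real.log #{s : Finset (Fin p) | s.card ≤ 2 ^ (k.1 : ℕ)} := by
        rw [← Real.log_prod fun k _ => by exact_mod_cast (card_pos.2 ⟨∅, by simp⟩).ne',
          ← Nat.cast_prod]
        exact Real.log_natCast_le_log_natCast ncard_image_latalaProj_le
    _ ≤ ∑ k : Fin (l + 1) × Bool, 2 ^ (k.1 : ℕ) * ((m : ℝ) + 5 - k.1) :=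
        sum_le_sum fun k _ => log_card_filter_card_le_two_pow_le hp (by omega)
    _ = 2 * ∑ j ∈ range (l + 1), 2 ^ j * ((m + 5 : ℝ) - j) := by
        rw [Fintype.sum_prod_type, mul_sum, ← Fin.sum_univ_eq_sum_range]
        simp only [Fintype.sum_bool, ← two_mul]
    _ ≤ 12 * ((m : ℝ) + 4 - l) * 2 ^ l := by
        rw [pow_succ] at hgeom
        nlinarith [pow_pos (zero_lt_two' ℝ) l]
end

section
/- Suppose a multi-labeling of an l-graph has d_1, ..., d_l n-labels on its first through l-th n-vertices, and m total distinct labels (counting p-labels and n-labels as distinct types). Then m ≤ (l + Σ_{s=1}^l d_s)/2 + 1. -/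
open Finset

/-- Number of edges of the `l`-graph cycle whose `p`-vertex endpoint has label `i`
and whose `n`-vertex endpoint contains `j` in its label tuple. The `s`-th `n`-vertex
sits between the `s`-th and `(s+1)`-th `p`-vertices. -/
def edgeCount {l : ℕ} [NeZero l] (pl : Fin l → ℕ) (nl : Fin l → Finset ℕ) (i j : ℕ) : ℕ :=
  ∑ s : Fin l, ((if pl s = i ∧ j ∈ nl s then 1 else 0) +
    (if pl (s + 1) = i ∧ j ∈ nl s then 1 else 0))

/-- A multi-labeling of the `l`-graph (a cycle alternating between `l` `p`-vertices and
`l` `n`-vertices): each `p`-vertex gets a label, each `n`-vertex gets a set of between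
1 and `D` distinct labels; consecutive `p`-vertices have distinct labels, and every
edge count `b_{ij}` is even. -/
def IsMultiLabeling (l D : ℕ) [NeZero l] (pl : Fin l → ℕ) (nl : Fin l → Finset ℕ) : Prop :=
  (∀ s : Fin l, pl s ≠ pl (s + 1)) ∧
  (∀ s : Fin l, 1 ≤ (nl s).card ∧ (nl s).card ≤ D) ∧
  (∀ i j : ℕ, Even (edgeCount pl nl i j))

/-- `N_j`: the number of `n`-vertices whose label tuple contains `j`. -/
def nLabelCount {l : ℕ} (nl : Fin l → Finset ℕ) (j : ℕ) : ℕ :=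
  (Finset.univ.filter fun s => j ∈ nl s).card

/-- `m`: the total number of distinct `p`-labels plus distinct `n`-labels. -/
def distinctLabels {l : ℕ} (pl : Fin l → ℕ) (nl : Fin l → Finset ℕ) : ℕ :=
  (Finset.univ.image pl).card + (Finset.univ.biUnion nl).card

/-- The excess `Δ = (l + Σ_s d_s)/2 + 1 − m` of a multi-labeling. -/
noncomputable def excess {l : ℕ} (pl : Fin l → ℕ) (nl : Fin l → Finset ℕ) : ℝ :=
  ((l : ℝ) + ∑ s : Fin l, ((nl s).card : ℝ)) / 2 + 1 - distinctLabels pl nl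


/-!
Work over `𝔽₂` with vectors indexed by the `n`-vertices. For a `p`-label `i` let `x_i` count,
mod 2, the neighbours labelled `i` of each `n`-vertex, and for an `n`-label `j` let `y_j` be the
indicator of the `n`-vertices whose tuple contains `j`; the parity condition says exactly
`x_i ⬝ y_j = 0`. Going around the cycle shows that the `x_i` are independent once one of them is
dropped, so an independent family of `y_j` has at most `l + 1 - #(p-labels)` members. Take such a
family `B` spanning all the `y_j`. Every `n`-vertex carries a label of `B`, so the labels of `B`
occur at least `l` times altogether, while any other `n`-label occurs at least twice (a label
occurring once gives an odd edge count, because consecutive `p`-labels differ). Hence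
`∑ d_s ≥ l + 2 (#(n-labels) - #B)`, which rearranges to the bound.
-/
theorem card_add_card_le_of_dotProduct_eq_zero {K n ι κ : Type*} [Field K] [Fintype n]
    [Fintype ι] [Fintype κ] {x : ι → n → K} {y : κ → n → K} (hx : LinearIndependent K x)
    (hy : LinearIndependent K y) (hxy : ∀ i j, x i ⬝ᵥ y j = 0) :
    Fintype.card ι + Fintype.card κ ≤ Fintype.card n := by
  let M : Matrix ι n K := Matrix.of x
  have hrange : Module.finrank K (LinearMap.range M.mulVecLin) = Fintype.card ι := by
    rw [← Matrix.rank, Matrix.rank_eq_finrank_span_row]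
    exact finrank_span_eq_card hx
  have hker : Fintype.card κ ≤ Module.finrank K (LinearMap.ker M.mulVecLin) := by
    rw [← finrank_span_eq_card hy]
    refine Submodule.finrank_mono (Submodule.span_le.mpr ?_)
    rintro _ ⟨j, rfl⟩
    ext i
    exact hxy i j
  have := LinearMap.finrank_range_add_finrank_ker M.mulVecLin
  rw [Module.finrank_fintype_fun_eq_card] at this
  omega

theorem Fin.apply_eq_apply_zero_of_forall_apply_add_one {n : ℕ} [NeZero n] {α : Type*}
    {f : Fin n → α} (h : ∀ s, f (s + 1) = f s) (s : Fin n) : f s = f 0 := by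
  obtain ⟨m, rfl⟩ := Nat.exists_eq_succ_of_ne_zero (NeZero.ne n)
  induction s using Fin.induction with
  | zero => rfl
  | succ i ih => rw [← Fin.coeSucc_eq_succ, h, ih]

theorem exists_mem_apply_ne_zero_of_mem_span {R ι n : Type*} [Semiring R] {v : ι → n → R}
    {b : Set ι} {w : n → R} (hw : w ∈ Submodule.span R (v '' b)) {s : n} (hs : w s ≠ 0) :
    ∃ i ∈ b, v i s ≠ 0 := by
  by_contra! h
  have : Submodule.span R (v '' b) ≤ LinearMap.ker (LinearMap.proj s) := by
    rw [Submodule.span_le]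
    rintro _ ⟨i, hi, rfl⟩
    exact h i hi
  exact hs (this hw)

section LGraph

variable {l : ℕ}

def pLabelVec [NeZero l] (pl : Fin l → ℕ) (i : ℕ) : Fin l → ZMod 2 :=
  fun s => (if pl s = i then 1 else 0) + (if pl (s + 1) = i then 1 else 0)

def nLabelVec (nl : Fin l → Finset ℕ) (j : ℕ) : Fin l → ZMod 2 :=
  fun s => if j ∈ nl s then 1 else 0

theorem pLabelVec_dotProduct_nLabelVec [NeZero l] (pl : Fin l → ℕ) (nl : Fin l → Finset ℕ)
    (i j : ℕ) : pLabelVec pl i ⬝ᵥ nLabelVec nl j = (edgeCount pl nl i j : ZMod 2) := by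
  rw [edgeCount, dotProduct]
  push_cast
  refine sum_congr rfl fun s _ => ?_
  unfold pLabelVec nLabelVec
  split_ifs <;> simp_all

theorem linearCombination_pLabelVec_apply [NeZero l] (pl : Fin l → ℕ) (c : ℕ →₀ ZMod 2)
    (s : Fin l) :
    Finsupp.linearCombination (ZMod 2) (pLabelVec pl) c s = c (pl s) + c (pl (s + 1)) := by
  simp only [Finsupp.linearCombination_apply, Finsupp.sum, Finset.sum_apply, Pi.smul_apply,
    pLabelVec, smul_eq_mul, mul_add, mul_ite, mul_one, mul_zero, sum_add_distrib, sum_ite_eq,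
    Finsupp.if_mem_support]

theorem linearIndepOn_pLabelVec [NeZero l] (pl : Fin l → ℕ) :
    LinearIndepOn (ZMod 2) (pLabelVec pl) ↑((univ.image pl).erase (pl 0)) := by
  rw [linearIndepOn_iff]
  intro c hc hzero
  have hstep : ∀ s, c (pl (s + 1)) = c (pl s) := fun s =>
    (CharTwo.add_eq_zero.mp <| by rw [← linearCombination_pLabelVec_apply, hzero]; rfl).symm
  have hc0 : c (pl 0) = 0 := Finsupp.notMem_support_iff.mp fun h => by simpa using hc h
  ext a
  by_cases ha : a ∈ univ.image pl
  · obtain ⟨s, -, rfl⟩ := mem_image.mp ha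
    rw [Fin.apply_eq_apply_zero_of_forall_apply_add_one (f := fun s => c (pl s)) hstep s, hc0]
    rfl
  · exact Finsupp.notMem_support_iff.mp fun h => ha (mem_of_mem_erase (hc h))

theorem sum_nLabelCount (nl : Fin l → Finset ℕ) (T : Finset ℕ) :
    ∑ j ∈ T, nLabelCount nl j = ∑ s, #(nl s ∩ T) := by
  simp only [nLabelCount, card_eq_sum_ones, sum_filter, inter_comm (nl _) T,
    ← filter_mem_eq_inter]
  exact sum_comm

theorem two_le_nLabelCount [NeZero l] {pl : Fin l → ℕ} {nl : Fin l → Finset ℕ}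
    (hne : ∀ s, pl s ≠ pl (s + 1)) (hev : ∀ i j, Even (edgeCount pl nl i j)) {j : ℕ} {s₀ : Fin l}
    (hj : j ∈ nl s₀) : 2 ≤ nLabelCount nl j := by
  by_contra! hlt
  have huniq : ∀ s, j ∈ nl s → s = s₀ := fun s hs =>
    card_le_one.mp (Nat.le_of_lt_succ hlt) s (by simp [hs]) s₀ (by simp [hj])
  have hone : edgeCount pl nl (pl s₀) j = 1 := by
    rw [edgeCount, sum_eq_single s₀ (fun s _ hs => by simp [mt (huniq s) hs]) (by simp)]
    simp [hj, (hne s₀).symm]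
  simpa [hone] using hev (pl s₀) j

end LGraph

theorem two_mul_distinctLabels_le {l D : ℕ} [NeZero l] {pl : Fin l → ℕ} {nl : Fin l → Finset ℕ}
    (h : IsMultiLabeling l D pl nl) : 2 * distinctLabels pl nl ≤ l + ∑ s, #(nl s) + 2 := by
  obtain ⟨hne, hcard, hev⟩ := h
  unfold distinctLabels
  set P := univ.image pl
  set J := univ.biUnion nl
  obtain ⟨B, hBJ, -, hspan, hB⟩ := exists_linearIndepOn_extension (K := ZMod 2)
    (v := nLabelVec nl) (linearIndepOn_empty _ _) (Set.empty_subset (J : Set ℕ))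
  lift B to Finset ℕ using J.finite_toSet.subset hBJ
  rw [coe_subset] at hBJ
  have hdim : #P - 1 + #B ≤ l := by
    have := card_add_card_le_of_dotProduct_eq_zero (linearIndepOn_pLabelVec pl) hB
      fun i j => by
        rw [pLabelVec_dotProduct_nLabelVec, (ZMod.natCast_eq_zero_iff_even).mpr (hev _ _)]
    simpa only [coe_sort_coe, Fintype.card_coe, Fintype.card_fin,
      card_erase_of_mem (mem_image_of_mem pl (mem_univ 0))] using this
  have hcover : l ≤ ∑ j ∈ B, nLabelCount nl j := by
    rw [sum_nLabelCount]
    refine le_of_eq_of_le (by simp) (sum_le_sum fun s _ => ?_ : ∑ _s : Fin l, 1 ≤ _)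
    obtain ⟨j, hj⟩ := card_pos.mp (hcard s).1
    obtain ⟨b, hb, hbs⟩ := exists_mem_apply_ne_zero_of_mem_span
      (hspan ⟨j, mem_biUnion.mpr ⟨s, mem_univ s, hj⟩, rfl⟩) (s := s) (by simp [nLabelVec, hj])
    exact card_pos.mpr ⟨b, mem_inter.mpr ⟨by simpa [nLabelVec] using hbs, hb⟩⟩
  have hrest : #(J \ B) * 2 ≤ ∑ j ∈ J \ B, nLabelCount nl j :=
    card_nsmul_le_sum (J \ B) (nLabelCount nl) 2 fun j hj => by
      obtain ⟨s, -, hjs⟩ := mem_biUnion.mp (mem_sdiff.mp hj).1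
      exact two_le_nLabelCount hne hev hjs
  have htotal : ∑ s, #(nl s) = ∑ j ∈ J, nLabelCount nl j := by
    rw [sum_nLabelCount]
    exact sum_congr rfl fun s _ => by
      rw [inter_eq_left.mpr (subset_biUnion_of_mem nl (mem_univ s))]
  rw [← sum_sdiff hBJ] at htotal
  have hP : 1 ≤ #P := card_pos.mpr ⟨pl 0, mem_image_of_mem pl (mem_univ 0)⟩
  have hJ : #(J \ B) + #B = #J := card_sdiff_add_card_eq_card hBJ
  omega

theorem stmt11_general (l D : ℕ) [NeZero l]
    (pl : Fin l → ℕ) (nl : Fin l → Finset ℕ)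
    (h : IsMultiLabeling l D pl nl) :
    (distinctLabels pl nl : ℝ) ≤
      ((l : ℝ) + ∑ s : Fin l, ((nl s).card : ℝ)) / 2 + 1 := by
  have hle : (2 * distinctLabels pl nl : ℝ) ≤ l + ∑ s, ((nl s).card : ℝ) + 2 := by
    exact_mod_cast two_mul_distinctLabels_le h
  linarith

theorem stmt11 (l D : ℕ) [NeZero l] (hl : 2 ≤ l)
    (pl : Fin l → ℕ) (nl : Fin l → Finset ℕ)
    (h : IsMultiLabeling l D pl nl) :
    (distinctLabels pl nl : ℝ) ≤
      ((l : ℝ) + ∑ s : Fin l, ((nl s).card : ℝ)) / 2 + 1 :=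
  stmt11_general l D pl nl h
end

section
/- Suppose a simple-labeling of an l-graph has k̃ n-vertices with non-empty label and m̃ total distinct p-labels and distinct non-empty n-labels. Then m̃ ≤ (l + k̃)/2 + 1. -/
open Finset

/-- A simple-labeling of the `l`-graph: each `p`-vertex gets a label, each `n`-vertex
gets either one label (`some j`) or the empty label (`none`); consecutive `p`-vertices
have distinct labels; for each `(i, j)` the number of edges with `p`-endpoint labeled `i`
and `n`-endpoint labeled `j` is even; and for distinct `i, i'` the number of consecutive
triples `(i, ∅, i')` equals the number of triples `(i', ∅, i)`. -/
def IsSimpleLabeling (l : ℕ) [NeZero l] (pl : Fin l → ℕ) (nl : Fin l → Option ℕ) : Prop :=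
  (∀ s : Fin l, pl s ≠ pl (s + 1)) ∧
  (∀ i j : ℕ, Even (∑ s : Fin l,
    ((if pl s = i ∧ nl s = some j then 1 else 0) +
      (if pl (s + 1) = i ∧ nl s = some j then 1 else 0)))) ∧
  (∀ i i' : ℕ, i ≠ i' →
    (Finset.univ.filter fun s : Fin l => pl s = i ∧ nl s = none ∧ pl (s + 1) = i').card =
      (Finset.univ.filter fun s : Fin l => pl s = i' ∧ nl s = none ∧ pl (s + 1) = i).card)

/-!
Build a graph on the labels: an empty n-vertex between p-labels `i`, `i'` gives the edge
`{i, i'}`, and an n-vertex labelled `j` between `i`, `i'` gives the edges `{j, i}`, `{j, i'}`.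
Walking around the cycle shows the graph is connected, so it has at least `m̃ - 1` edges.
Each position of the cycle produces at most one edge (empty n-label) or two edges, so at most
`l + k̃` edge occurrences in total, while conditions (2) and (3) force every edge to occur at
least twice. Hence `2 (m̃ - 1) ≤ l + k̃`.
-/

namespace SimpleGraph

variable {V : Type*} {G : SimpleGraph V}

theorem finite_support [Finite G.edgeSet] : G.support.Finite := by
  classical
  exact (G.edgeSet.toFinite.biUnion fun e _ ↦ e.toFinset.finite_toSet).subset
    fun x ⟨y, hxy⟩ ↦ Set.mem_biUnion hxy (Sym2.mem_toFinset.2 (Sym2.mem_mk_left x y))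

theorem ConnectedComponent.supp_subset_insert_support (v : V) :
    (G.connectedComponentMk v).supp ⊆ insert v G.support := by
  intro u hu
  obtain ⟨p⟩ := ConnectedComponent.exact hu
  cases p with
  | nil => exact Set.mem_insert _ _
  | cons h _ => exact Set.mem_insert_of_mem _ ⟨_, h⟩

theorem card_le_card_edgeSet_add_one_of_reachable [Finite G.edgeSet] {v : V} {S : Finset V}
    (hS : ∀ w ∈ S, G.Reachable v w) : #S ≤ Nat.card G.edgeSet + 1 := by
  set C := G.connectedComponentMk v
  have hC : C.supp.Finite :=
    (G.finite_support.insert v).subset (ConnectedComponent.supp_subset_insert_support v)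
  calc #S = Nat.card (S : Set V) := by simp
    _ ≤ Nat.card C.supp :=
      Nat.card_mono hC fun w hw ↦ ConnectedComponent.sound (hS w hw).symm
    _ ≤ Nat.card C.toSimpleGraph.edgeSet + 1 :=
      C.connected_toSimpleGraph.card_vert_le_card_edgeSet_add_one
    _ ≤ Nat.card G.edgeSet + 1 := by
      gcongr
      exact Nat.card_le_card_of_injective _ (Embedding.induce C.supp).mapEdgeSet.injective

open Fin.NatCast in
theorem reachable_zero_of_reachable_add_one {l : ℕ} [NeZero l] (f : Fin l → V)
    (hf : ∀ s, G.Reachable (f s) (f (s + 1))) (s : Fin l) : G.Reachable (f 0) (f s) := by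
  have (n : ℕ) : G.Reachable (f 0) (f n) := by
    induction n with
    | zero => simp
    | succ n ih => exact Nat.cast_succ (R := Fin l) n ▸ ih.trans (hf n)
  simpa using this s

end SimpleGraph

theorem Finset.card_biUnion_mul_le_sum_card {ι α : Type*} [DecidableEq α] {s : Finset ι}
    {f : ι → Finset α} {n : ℕ} (h : ∀ a ∈ s.biUnion f, n ≤ #{i ∈ s | a ∈ f i}) :
    #(s.biUnion f) * n ≤ ∑ i ∈ s, #(f i) := by
  calc #(s.biUnion f) * n ≤ ∑ a ∈ s.biUnion f, #{i ∈ s | a ∈ f i} := by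
        simpa using card_nsmul_le_sum _ _ _ h
    _ = ∑ i ∈ s, #{a ∈ s.biUnion f | a ∈ f i} :=
      sum_card_bipartiteAbove_eq_sum_card_bipartiteBelow (fun a i ↦ a ∈ f i)
    _ ≤ ∑ i ∈ s, #(f i) := sum_le_sum fun i _ ↦ card_le_card fun _ ha ↦ (mem_filter.1 ha).2

theorem Finset.card_filter_or_eq_sum_boole_add_boole {α : Type*} [DecidableEq α] (s : Finset α)
    {p q : α → Prop} [DecidablePred p] [DecidablePred q] (h : ∀ x ∈ s, ¬(p x ∧ q x)) :
    #{x ∈ s | p x ∨ q x} = ∑ x ∈ s, ((if p x then 1 else 0) + if q x then 1 else 0) := by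
  rw [sum_add_distrib, ← card_filter, ← card_filter, filter_or, card_union_of_disjoint]
  exact disjoint_filter.2 fun x hx hp hq ↦ h x hx ⟨hp, hq⟩

variable {l : ℕ} [NeZero l]

/-- The edges contributed by position `s`; p-labels are encoded as `inl`, n-labels as `inr`. -/
def labelEdges (pl : Fin l → ℕ) (nl : Fin l → Option ℕ) (s : Fin l) : Finset (Sym2 (ℕ ⊕ ℕ)) :=
  match nl s with
  | none => {s(.inl (pl s), .inl (pl (s + 1)))}
  | some j => {s(.inr j, .inl (pl s)), s(.inr j, .inl (pl (s + 1)))}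

def labelGraph (pl : Fin l → ℕ) (nl : Fin l → Option ℕ) : SimpleGraph (ℕ ⊕ ℕ) :=
  SimpleGraph.fromEdgeSet ↑(univ.biUnion (labelEdges pl nl))

def labels (pl : Fin l → ℕ) (nl : Fin l → Option ℕ) : Finset (ℕ ⊕ ℕ) :=
  (univ.image pl).disjSum (univ.biUnion fun s ↦ (nl s).toFinset)

variable {pl : Fin l → ℕ} {nl : Fin l → Option ℕ}

theorem sum_card_labelEdges_le : ∑ s, #(labelEdges pl nl s) ≤ l + #{s | nl s ≠ none} := by
  have hs (s : Fin l) : #(labelEdges pl nl s) ≤ 1 + if nl s ≠ none then 1 else 0 := by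
    cases hns : nl s <;> simp [labelEdges, hns, card_le_two]
  calc ∑ s, #(labelEdges pl nl s) ≤ ∑ s : Fin l, (1 + if nl s ≠ none then 1 else 0) :=
        sum_le_sum fun s _ ↦ hs s
    _ = l + #{s | nl s ≠ none} := by simp [sum_add_distrib, card_filter]

theorem edgeSet_labelGraph_subset :
    (labelGraph pl nl).edgeSet ⊆ ↑(univ.biUnion (labelEdges pl nl)) := by
  simp [labelGraph, SimpleGraph.edgeSet_fromEdgeSet]

instance : Finite (labelGraph pl nl).edgeSet :=
  (finite_toSet _).subset edgeSet_labelGraph_subset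

theorem card_edgeSet_labelGraph_le :
    Nat.card (labelGraph pl nl).edgeSet ≤ #(univ.biUnion (labelEdges pl nl)) :=
  Nat.card_eq_finsetCard _ ▸ Nat.card_mono (finite_toSet _) edgeSet_labelGraph_subset

theorem labelGraph_adj {s : Fin l} {v w : ℕ ⊕ ℕ} (he : s(v, w) ∈ labelEdges pl nl s)
    (hvw : v ≠ w) : (labelGraph pl nl).Adj v w := by
  rw [labelGraph, SimpleGraph.fromEdgeSet_adj]
  exact ⟨mem_biUnion.2 ⟨s, mem_univ s, he⟩, hvw⟩

theorem labelGraph_adj_inr_left {s : Fin l} {j : ℕ} (hs : nl s = some j) :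
    (labelGraph pl nl).Adj (.inr j) (.inl (pl s)) :=
  labelGraph_adj (s := s) (by simp [labelEdges, hs]) Sum.inr_ne_inl

theorem labelGraph_adj_inr_right {s : Fin l} {j : ℕ} (hs : nl s = some j) :
    (labelGraph pl nl).Adj (.inr j) (.inl (pl (s + 1))) :=
  labelGraph_adj (s := s) (by simp [labelEdges, hs]) Sum.inr_ne_inl

namespace IsSimpleLabeling

theorem two_le_card_of_none (h : IsSimpleLabeling l pl nl) {s : Fin l} (hs : nl s = none) :
    2 ≤ #{t | s(.inl (pl s), .inl (pl (s + 1))) ∈ labelEdges pl nl t} := by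
  obtain ⟨hne, -, hsymm⟩ := h
  set T := ({t | pl t = pl s ∧ nl t = none ∧ pl (t + 1) = pl (s + 1)} : Finset (Fin l))
  set T' := ({t | pl t = pl (s + 1) ∧ nl t = none ∧ pl (t + 1) = pl s} : Finset (Fin l))
  have hcard : #T = #T' := hsymm _ _ (hne s)
  have hsT : s ∈ T := by simp [T, hs]
  have hdisj : Disjoint T T' := disjoint_filter.2 fun t _ h h' ↦ hne s (h.1.symm.trans h'.1)
  have hsub : T ∪ T' ⊆
      ({t | s(.inl (pl s), .inl (pl (s + 1))) ∈ labelEdges pl nl t} : Finset _) := by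
    intro t ht
    simp only [T, T', mem_union, mem_filter, mem_univ, true_and] at ht ⊢
    rcases ht with ⟨h₁, h₂, h₃⟩ | ⟨h₁, h₂, h₃⟩ <;> simp [labelEdges, h₁, h₂, h₃, Sym2.eq_swap]
  calc 2 ≤ #T + #T' := by have := card_pos.2 ⟨s, hsT⟩; omega
    _ = #(T ∪ T') := (card_union_of_disjoint hdisj).symm
    _ ≤ _ := card_le_card hsub

theorem two_le_card_of_some (h : IsSimpleLabeling l pl nl) {s : Fin l} {j i : ℕ}
    (hs : nl s = some j) (hi : pl s = i ∨ pl (s + 1) = i) :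
    2 ≤ #{t | s(.inr j, .inl i) ∈ labelEdges pl nl t} := by
  obtain ⟨hne, heven, -⟩ := h
  set T := ({t | (pl t = i ∧ nl t = some j) ∨ (pl (t + 1) = i ∧ nl t = some j)} : Finset (Fin l))
  have hT : Even #T := by
    rw [card_filter_or_eq_sum_boole_add_boole]
    · exact heven i j
    · exact fun t _ ⟨⟨h, _⟩, h', _⟩ ↦ hne t (h.trans h'.symm)
  have hsT : s ∈ T := by rcases hi with hi | hi <;> simp [T, hi, hs]
  have h2 : 2 ≤ #T := by
    obtain ⟨m, hm⟩ := hT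
    have := card_pos.2 ⟨s, hsT⟩
    omega
  refine h2.trans (card_le_card fun t ht ↦ ?_)
  simp only [T, mem_filter, mem_univ, true_and] at ht ⊢
  rcases ht with ⟨rfl, ht⟩ | ⟨rfl, ht⟩ <;> simp [labelEdges, ht]

theorem two_le_card_filter_mem_labelEdges (h : IsSimpleLabeling l pl nl) {s : Fin l}
    {e : Sym2 (ℕ ⊕ ℕ)} (he : e ∈ labelEdges pl nl s) : 2 ≤ #{t | e ∈ labelEdges pl nl t} := by
  unfold labelEdges at he
  split at he
  · rw [mem_singleton.1 he]
    exact h.two_le_card_of_none ‹_›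
  · rcases mem_insert.1 he with rfl | he
    · exact h.two_le_card_of_some ‹_› (.inl rfl)
    · rw [mem_singleton.1 he]
      exact h.two_le_card_of_some ‹_› (.inr rfl)

theorem reachable_inl_add_one (h : IsSimpleLabeling l pl nl) (s : Fin l) :
    (labelGraph pl nl).Reachable (.inl (pl s)) (.inl (pl (s + 1))) := by
  cases hs : nl s with
  | none =>
    exact (labelGraph_adj (s := s) (by simp [labelEdges, hs]) (by simpa using h.1 s)).reachable
  | some j =>
    exact (labelGraph_adj_inr_left hs).reachable.symm.trans (labelGraph_adj_inr_right hs).reachable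

theorem reachable_of_mem_labels (h : IsSimpleLabeling l pl nl) {w : ℕ ⊕ ℕ}
    (hw : w ∈ labels pl nl) : (labelGraph pl nl).Reachable (.inl (pl 0)) w := by
  have hp (s : Fin l) : (labelGraph pl nl).Reachable (.inl (pl 0)) (.inl (pl s)) :=
    SimpleGraph.reachable_zero_of_reachable_add_one (fun s ↦ Sum.inl (pl s))
      h.reachable_inl_add_one s
  rcases w with i | j
  · obtain ⟨s, -, rfl⟩ := mem_image.1 (inl_mem_disjSum.1 hw)
    exact hp s
  · obtain ⟨s, -, hj⟩ := mem_biUnion.1 (inr_mem_disjSum.1 hw)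
    exact (hp s).trans (labelGraph_adj_inr_left (Option.mem_toFinset.1 hj)).reachable.symm

end IsSimpleLabeling

theorem stmt12_general (l : ℕ) [NeZero l]
    (pl : Fin l → ℕ) (nl : Fin l → Option ℕ)
    (h : IsSimpleLabeling l pl nl) :
    (((Finset.univ.image pl).card +
        (Finset.univ.biUnion fun s => (nl s).toFinset).card : ℕ) : ℝ) ≤
      ((l : ℝ) + (Finset.univ.filter fun s : Fin l => nl s ≠ none).card) / 2 + 1 := by
  have hvert : #(labels pl nl) ≤ #(univ.biUnion (labelEdges pl nl)) + 1 :=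
    (SimpleGraph.card_le_card_edgeSet_add_one_of_reachable fun _ ↦ h.reachable_of_mem_labels).trans
      (Nat.add_le_add_right card_edgeSet_labelGraph_le 1)
  have hedge : #(univ.biUnion (labelEdges pl nl)) * 2 ≤ l + #{s | nl s ≠ none} :=
    (card_biUnion_mul_le_sum_card fun _ he ↦ by
      obtain ⟨s, -, he⟩ := mem_biUnion.1 he
      simpa using h.two_le_card_filter_mem_labelEdges he).trans sum_card_labelEdges_le
  rw [labels, card_disjSum] at hvert
  have key : 2 * (#(univ.image pl) + #(univ.biUnion fun s ↦ (nl s).toFinset)) ≤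
      l + #{s | nl s ≠ none} + 2 := by omega
  have key_real := (Nat.cast_le (α := ℝ)).2 key
  push_cast at key_real ⊢
  linarith

theorem stmt12 (l : ℕ) [NeZero l] (hl : 2 ≤ l)
    (pl : Fin l → ℕ) (nl : Fin l → Option ℕ)
    (h : IsSimpleLabeling l pl nl) :
    (((Finset.univ.image pl).card +
        (Finset.univ.biUnion fun s => (nl s).toFinset).card : ℕ) : ℝ) ≤
      ((l : ℝ) + (Finset.univ.filter fun s : Fin l => nl s ≠ none).card) / 2 + 1 :=
  stmt12_general l pl nl h
end

section
/- In a multi-labeling of an l-graph with l ≥ 4, suppose a p-vertex V has a p-label appearing on no other p-vertex. Let U, T be the n-vertex and p-vertex preceding V, and W, X be the n-vertex and p-vertex following V. If T and X have different p-labels, then deleting V and W and connecting U to X yields an (l−1)-graph with a valid multi-labeling; if T and X have the same p-label, then deleting U, V, W, X and connecting T to the n-vertex after X yields an (l−2)-graph with a valid multi-labeling. -/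
open Finset

/-!
Since the label of `V` occurs on no other `p`-vertex, the only edges counted by `b_{pl V, j}`
are `V–U` and `V–W`, so evenness forces `U` and `W` to carry the same labels. Deleting vertices
and closing the cycle again then changes every `b_{ij}` by an even amount. In the first case the
removed edges `U–V`, `V–W`, `W–X` and the new edge `U–X` cancel in pairs because `U` and `W`
agree. In the second case (`Z` the `n`-vertex after `X`) the removed edges `T–U`, `U–V`, `V–W`,
`W–X`, `X–Z` and the new edge `T–Z` cancel in pairs because moreover `T` and `X` agree.
-/

section

open Fin.NatCast

def incidence (i j a : ℕ) (S : Finset ℕ) : ℕ := if a = i ∧ j ∈ S then 1 else 0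

/-- The edge counts `b_{ij}` of the path `P 0 – N 0 – P 1 – ⋯ – N (n - 1) – P n`. -/
def pathCount (P : ℕ → ℕ) (N : ℕ → Finset ℕ) (i j n : ℕ) : ℕ :=
  ∑ t ∈ range n, (incidence i j (P t) (N t) + incidence i j (P (t + 1)) (N t))

lemma pathCount_succ (P : ℕ → ℕ) (N : ℕ → Finset ℕ) (i j n : ℕ) :
    pathCount P N i j (n + 1) =
      pathCount P N i j n + incidence i j (P n) (N n) + incidence i j (P (n + 1)) (N n) := by
  rw [pathCount, sum_range_succ, ← add_assoc]; rfl

lemma pathCount_congr {P P' : ℕ → ℕ} {N N' : ℕ → Finset ℕ} {n : ℕ}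
    (hP : ∀ t ≤ n, P t = P' t) (hN : ∀ t < n, N t = N' t) (i j : ℕ) :
    pathCount P N i j n = pathCount P' N' i j n :=
  sum_congr rfl fun t ht => by
    rw [mem_range] at ht
    rw [hP t ht.le, hP (t + 1) ht, hN t ht]

lemma edgeCount_comp_add_left {l : ℕ} [NeZero l] (pl : Fin l → ℕ) (nl : Fin l → Finset ℕ)
    (c : Fin l) (i j : ℕ) :
    edgeCount (fun t => pl (c + t)) (fun t => nl (c + t)) i j = edgeCount pl nl i j :=
  Fintype.sum_equiv (Equiv.addLeft c) _ _ fun s => by rw [Equiv.coe_addLeft, add_assoc]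

lemma edgeCount_eq_pathCount {l : ℕ} [NeZero l] (pl : Fin l → ℕ) (nl : Fin l → Finset ℕ)
    (c : Fin l) (i j : ℕ) :
    edgeCount pl nl i j = pathCount (fun n => pl (c + n)) (fun n => nl (c + n)) i j l := by
  rw [← edgeCount_comp_add_left pl nl c, pathCount, ← Fin.sum_univ_eq_sum_range]
  simp only [Nat.cast_succ, Fin.cast_val_eq_self]
  rfl

lemma edgeCount_natCast {m : ℕ} (P : ℕ → ℕ) (N : ℕ → Finset ℕ) (i j : ℕ) :
    edgeCount (l := m + 1) (fun t => P t) (fun t => N t) i j =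
      pathCount P N i j m + incidence i j (P m) (N m) + incidence i j (P 0) (N m) := by
  rw [edgeCount, Fin.sum_univ_castSucc, pathCount, ← Fin.sum_univ_eq_sum_range, add_assoc]
  simp [incidence]

lemma Fin.castLE_eq_natCast_val {m n : ℕ} [NeZero n] (h : m ≤ n) (t : Fin m) :
    Fin.castLE h t = ((t : ℕ) : Fin n) :=
  Fin.ext (by simp [Nat.mod_eq_of_lt (t.isLt.trans_le h)])

lemma natCast_succ_ne_of_path {m : ℕ} {P : ℕ → ℕ} (hpath : ∀ n < m, P n ≠ P (n + 1))
    (hclose : P m ≠ P 0) (t : Fin (m + 1)) : P t ≠ P ↑(t + 1) := by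
  induction t using Fin.lastCases with
  | last => simpa using hclose
  | cast s => simpa [Fin.coeSucc_eq_succ] using hpath s s.isLt

lemma nl_sub_one_eq_of_unique {l : ℕ} [NeZero l] {pl : Fin l → ℕ} {nl : Fin l → Finset ℕ}
    (heven : ∀ i j, Even (edgeCount pl nl i j)) {v : Fin l} (hv : ∀ s, s ≠ v → pl s ≠ pl v) :
    nl (v - 1) = nl v := by
  ext j
  have hcount : edgeCount pl nl (pl v) j =
      (if j ∈ nl v then 1 else 0) + (if j ∈ nl (v - 1) then 1 else 0) := by
    rw [edgeCount, sum_add_distrib, sum_eq_single v (fun s _ hs => by simp [hv s hs]) (by simp),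
      sum_eq_single (v - 1) (fun s _ hs => by simp [hv (s + 1) fun h => hs (eq_sub_of_add_eq h)])
        (by simp)]
    simp
  have := heven (pl v) j
  rw [hcount] at this
  split_ifs at this with hW hU <;> simp_all

open Fin.CommRing in
lemma IsMultiLabeling.delete_of_ne {k D : ℕ} {pl : Fin (k + 4) → ℕ} {nl : Fin (k + 4) → Finset ℕ}
    (h : IsMultiLabeling (k + 4) D pl nl) {v : Fin (k + 4)} (hUW : nl (v - 1) = nl v)
    (hTX : pl (v - 1) ≠ pl (v + 1)) :
    IsMultiLabeling (k + 3) D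
        (fun t : Fin (k + 3) => pl (v + 1 + (t : ℕ)))
        (fun t : Fin (k + 3) => nl (v + 1 + (t : ℕ))) := by
  obtain ⟨hadj, hcard, heven⟩ := h
  have hl : ((k + 4 : ℕ) : Fin (k + 4)) = 0 := Fin.natCast_self _
  have hT : v + 1 + ((k + 2 : ℕ) : Fin (k + 4)) = v - 1 := by
    push_cast at hl ⊢; linear_combination hl
  have hV : v + 1 + ((k + 2 + 1 : ℕ) : Fin (k + 4)) = v := by
    push_cast at hl ⊢; linear_combination hl
  have hwrap : v + 1 + ((k + 2 + 1 + 1 : ℕ) : Fin (k + 4)) = v + 1 := by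
    push_cast at hl ⊢; linear_combination hl
  set P : ℕ → ℕ := fun n => pl (v + 1 + n)
  set N : ℕ → Finset ℕ := fun n => nl (v + 1 + n)
  change IsMultiLabeling (k + 3) D (fun t => P t) (fun t => N t)
  refine ⟨natCast_succ_ne_of_path (fun n _ => ?_) ?_, fun _ => hcard _, fun i j => ?_⟩
  · simpa [P, Nat.cast_succ, add_assoc] using hadj (v + 1 + n)
  · simpa only [P, hT, Nat.cast_zero, add_zero] using hTX
  · have hsplit : edgeCount pl nl i j =
        edgeCount (fun t : Fin (k + 3) => P t) (fun t => N t) i j +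
          2 * incidence i j (pl v) (nl v) := by
      rw [edgeCount_eq_pathCount pl nl (v + 1), edgeCount_natCast]
      change pathCount P N i j (k + 2 + 1 + 1) = _
      rw [pathCount_succ, pathCount_succ]
      simp only [P, N, hT, hV, hwrap, hUW, Nat.cast_zero, add_zero]
      ring
    exact (Nat.even_add.mp (hsplit ▸ heven i j)).mpr (even_two_mul _)

open Fin.CommRing in
lemma IsMultiLabeling.delete_of_eq {k D : ℕ} {pl : Fin (k + 4) → ℕ} {nl : Fin (k + 4) → Finset ℕ}
    (h : IsMultiLabeling (k + 4) D pl nl) {v : Fin (k + 4)} (hUW : nl (v - 1) = nl v)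
    (hTX : pl (v - 1) = pl (v + 1)) :
    IsMultiLabeling (k + 2) D
        (fun t : Fin (k + 2) => pl (v + 2 + (t : ℕ)))
        (fun t : Fin (k + 2) => if (t : ℕ) = k + 1 then nl (v + 1) else nl (v + 2 + (t : ℕ))) := by
  obtain ⟨hadj, hcard, heven⟩ := h
  have hl : ((k + 4 : ℕ) : Fin (k + 4)) = 0 := Fin.natCast_self _
  have hT : v + 2 + ((k + 1 : ℕ) : Fin (k + 4)) = v - 1 := by
    push_cast at hl ⊢; linear_combination hl
  have hV : v + 2 + ((k + 1 + 1 : ℕ) : Fin (k + 4)) = v := by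
    push_cast at hl ⊢; linear_combination hl
  have hX : v + 2 + ((k + 1 + 1 + 1 : ℕ) : Fin (k + 4)) = v + 1 := by
    push_cast at hl ⊢; linear_combination hl
  have hwrap : v + 2 + ((k + 1 + 1 + 1 + 1 : ℕ) : Fin (k + 4)) = v + 2 := by
    push_cast at hl ⊢; linear_combination hl
  set P : ℕ → ℕ := fun n => pl (v + 2 + n)
  set N : ℕ → Finset ℕ := fun n => nl (v + 2 + n)
  set N' : ℕ → Finset ℕ := fun n => if n = k + 1 then nl (v + 1) else N n
  change IsMultiLabeling (k + 2) D (fun t => P t) (fun t => N' t)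
  refine ⟨natCast_succ_ne_of_path (fun n _ => ?_) ?_, fun t => ?_, fun i j => ?_⟩
  · simpa [P, Nat.cast_succ, add_assoc] using hadj (v + 2 + n)
  · simp only [P, hT, hTX, Nat.cast_zero, add_zero]
    rw [← one_add_one_eq_two, ← add_assoc]
    exact hadj (v + 1)
  · dsimp only [N']
    split_ifs <;> exact hcard _
  · have hsplit : edgeCount pl nl i j =
        edgeCount (fun t : Fin (k + 2) => P t) (fun t => N' t) i j +
          2 * (incidence i j (pl v) (nl v) + incidence i j (pl (v + 1)) (nl v)) := by
      rw [edgeCount_eq_pathCount pl nl (v + 2), edgeCount_natCast,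
        pathCount_congr (N' := N) (fun _ _ => rfl) (fun t ht => if_neg ht.ne)]
      change pathCount P N i j (k + 1 + 1 + 1 + 1) = _
      rw [pathCount_succ, pathCount_succ, pathCount_succ]
      simp only [P, N, N', hT, hV, hX, hwrap, hTX, hUW, if_pos, Nat.cast_zero, add_zero]
      ring
    exact (Nat.even_add.mp (hsplit ▸ heven i j)).mpr (even_two_mul _)

end

/-- Here `l = k + 4`, and the surviving vertices are re-indexed starting just after the deleted
portion. -/
theorem stmt13 (k D : ℕ)
    (pl : Fin (k + 4) → ℕ) (nl : Fin (k + 4) → Finset ℕ)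
    (h : IsMultiLabeling (k + 4) D pl nl)
    (v : Fin (k + 4)) (hv : ∀ s : Fin (k + 4), s ≠ v → pl s ≠ pl v) :
    (pl (v - 1) ≠ pl (v + 1) →
      IsMultiLabeling (k + 3) D
        (fun t : Fin (k + 3) => pl (v + 1 + Fin.castLE (by omega) t))
        (fun t : Fin (k + 3) => nl (v + 1 + Fin.castLE (by omega) t))) ∧
    (pl (v - 1) = pl (v + 1) →
      IsMultiLabeling (k + 2) D
        (fun t : Fin (k + 2) => pl (v + 2 + Fin.castLE (by omega) t))
        (fun t : Fin (k + 2) =>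
          if (t : ℕ) = k + 1 then nl (v + 1)
          else nl (v + 2 + Fin.castLE (by omega) t))) := by
  have hUW : nl (v - 1) = nl v := nl_sub_one_eq_of_unique h.2.2 hv
  simp only [Fin.castLE_eq_natCast_val]
  exact ⟨h.delete_of_ne hUW, h.delete_of_eq hUW⟩
end

section
/- For l = 2 or l = 3, every multi-labeling of the l-graph has all l p-labels pairwise distinct, and all l n-vertices carry the same tuple of n-labels up to reordering. -/
/-!
When `l ≤ 3` any two distinct `p`-vertices of the cycle are adjacent, so the `p`-labels are
pairwise distinct. Once they are, the edge count for the label of the `p`-vertex `t + 1` sees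
only its two neighbours, the `n`-vertices `t` and `t + 1`, so its parity forces their label
sets to agree; going around the cycle, all `n`-vertices carry the same labels.
-/

open Finset

namespace Fin

open Fin.NatCast in
theorem apply_eq_apply_of_apply_add_one {α : Type*} {l : ℕ} [NeZero l] {f : Fin l → α}
    (h : ∀ t, f (t + 1) = f t) (s t : Fin l) : f s = f t := by
  have h_zero : ∀ k : ℕ, f (k : Fin l) = f 0 := fun k => by
    induction k with
    | zero => rfl
    | succ k ih => rw [Nat.cast_succ, h, ih]
  rw [← cast_val_eq_self s, ← cast_val_eq_self t, h_zero, h_zero]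

theorem eq_add_one_or_eq_add_one_of_ne {l : ℕ} [NeZero l] (hl : l ≤ 3) {s t : Fin l}
    (h : s ≠ t) : t = s + 1 ∨ s = t + 1 := by
  interval_cases l
  · exact absurd rfl (NeZero.ne 0)
  · exact absurd (Subsingleton.elim s t) h
  all_goals fin_cases s <;> fin_cases t <;> simp_all

end Fin

theorem Function.injective_of_apply_ne_apply_add_one {α : Type*} {l : ℕ} [NeZero l]
    (hl : l ≤ 3) {f : Fin l → α} (h : ∀ s, f s ≠ f (s + 1)) : Function.Injective f := by
  intro s t hst
  by_contra hne
  rcases Fin.eq_add_one_or_eq_add_one_of_ne hl hne with rfl | rfl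
  exacts [h s hst, h t hst.symm]

section InjectiveLabels

variable {l : ℕ} [NeZero l] {pl : Fin l → ℕ} (nl : Fin l → Finset ℕ)

theorem edgeCount_apply_add_one_of_injective (hpl : Function.Injective pl) (t : Fin l)
    (j : ℕ) : edgeCount pl nl (pl (t + 1)) j =
      (if j ∈ nl (t + 1) then 1 else 0) + if j ∈ nl t then 1 else 0 := by
  simp [edgeCount, sum_add_distrib, hpl.eq_iff, ite_and]

theorem apply_add_one_eq_of_even_edgeCount (hpl : Function.Injective pl)
    (heven : ∀ i j, Even (edgeCount pl nl i j)) (t : Fin l) : nl (t + 1) = nl t := by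
  ext j
  have hj := heven (pl (t + 1)) j
  rw [edgeCount_apply_add_one_of_injective nl hpl] at hj
  split_ifs at hj <;> simp_all

end InjectiveLabels

theorem stmt14 (l D : ℕ) [NeZero l] (hl : l = 2 ∨ l = 3)
    (pl : Fin l → ℕ) (nl : Fin l → Finset ℕ)
    (h : IsMultiLabeling l D pl nl) :
    Function.Injective pl ∧ ∀ s t : Fin l, nl s = nl t := by
  obtain ⟨hne, -, heven⟩ := h
  have hpl : Function.Injective pl :=
    Function.injective_of_apply_ne_apply_add_one (by omega) hne
  exact ⟨hpl, Fin.apply_eq_apply_of_apply_add_one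
    (apply_add_one_eq_of_even_edgeCount nl hpl heven)⟩
end

section
/- Let k: ℝ → ℝ be measurable with |k(x)| ≤ C e^{β|x|} for all x, and for each n ≥ 1 let y_n = n^{−1/2} Σ_{j=1}^n ξ_j η_j where ξ_j, η_j are i.i.d. N(0,1), all independent. Then E[e^{4β|y_n|}] is bounded uniformly in n > 16β², and lim_{R→∞} sup_n E[ k(y_n)² 1{|y_n| ≥ R} ] = 0. -/
/-!
Integrating out `η` first, `E e^{s ξ η} = E e^{s² ξ² / 2} = (1 - s²)^{-1/2}` for `s² < 1`, so by
independence of the pairs `E e^{t y_n} = (1 - t²/n)^{-n/2}`. As `(1 - a/n)^n → e^{-a}`, these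
values are bounded in `n`, and `e^{4β|y|} ≤ e^{4βy} + e^{-4βy}` bounds `E e^{4β|y_n|}` for
`n > 16β²`. On `{|y_n| ≥ R}` we have `k(y_n)² ≤ C² e^{-2βR} e^{4β|y_n|}`, so these tails are
uniformly `O(e^{-2βR})`; each of the finitely many remaining `n` has a vanishing tail by dominated
convergence.
-/

open MeasureTheory Measure ProbabilityTheory Finset Real Filter Topology

section

variable {Ω : Type*} {mΩ : MeasurableSpace Ω} {μ : Measure Ω}

lemma ProbabilityTheory.iIndepFun.curry {ι κ 𝓧 : Type*} {m𝓧 : MeasurableSpace 𝓧}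
    {X : ι × κ → Ω → 𝓧} (mX : ∀ p, Measurable (X p)) (h : iIndepFun X μ) :
    iIndepFun (fun i ω j ↦ X (i, j) ω) μ := by
  have := h.isProbabilityMeasure
  have _ p := Measure.isProbabilityMeasure_map (μ := μ) (mX p).aemeasurable
  rw [iIndepFun_iff_map_fun_eq_infinitePi_map fun i ↦ measurable_pi_lambda _ fun j ↦ mX (i, j)]
  have hrow i : μ.map (fun ω j ↦ X (i, j) ω) = infinitePi fun j ↦ μ.map (X (i, j)) :=
    (h.precomp (Prod.mk_right_injective i)).map_fun_eq_infinitePi_map fun j ↦ mX (i, j)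
  simp_rw [hrow]
  rw [← infinitePi_map_curry (fun i j ↦ μ.map (X (i, j))), ← h.map_fun_eq_infinitePi_map mX,
    Measure.map_map (by fun_prop) (by fun_prop)]
  rfl

lemma integral_exp_mul_abs_le_mgf_add_mgf {X : Ω → ℝ} {t : ℝ} (hpos : Integrable (fun ω ↦ exp (t * X ω)) μ)
    (hneg : Integrable (fun ω ↦ exp (-t * X ω)) μ) :
    ∫ ω, exp (t * |X ω|) ∂μ ≤ mgf X μ t + mgf X μ (-t) := by
  rw [mgf, mgf, ← integral_add hpos hneg]
  refine integral_mono (integrable_exp_mul_abs hpos hneg) (hpos.add hneg) fun ω ↦ ?_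
  rcases abs_cases (X ω) with ⟨h, _⟩ | ⟨h, _⟩
  · simp only [h]; linarith [exp_pos (-t * X ω)]
  · simp only [h, mul_neg, neg_mul]; linarith [exp_pos (t * X ω)]

lemma ite_sq_le_mul_exp_of_abs_le {k : ℝ → ℝ} {C β R x : ℝ} (hβ : 0 ≤ β)
    (hk : |k x| ≤ C * exp (β * |x|)) :
    (if R ≤ |x| then k x ^ 2 else 0) ≤ C ^ 2 * exp (-2 * β * R) * exp (4 * β * |x|) := by
  split_ifs with hR
  · calc k x ^ 2 ≤ (C * exp (β * |x|)) ^ 2 := by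
          rw [← sq_abs]; exact pow_le_pow_left₀ (abs_nonneg _) hk 2
      _ = C ^ 2 * exp (2 * β * |x|) := by rw [mul_pow, ← exp_nat_mul]; ring_nf
      _ ≤ C ^ 2 * exp (-2 * β * R) * exp (4 * β * |x|) := by
          rw [mul_assoc (C ^ 2), ← exp_add]
          gcongr
          nlinarith
  · positivity

lemma integral_ite_sq_le_of_abs_le_mul_exp {X : Ω → ℝ} {k : ℝ → ℝ} {C β : ℝ} (hβ : 0 ≤ β)
    (hk : ∀ x, |k x| ≤ C * exp (β * |x|)) (hint : Integrable (fun ω ↦ exp (4 * β * |X ω|)) μ)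
    (R : ℝ) :
    ∫ ω, (if R ≤ |X ω| then k (X ω) ^ 2 else 0) ∂μ
      ≤ C ^ 2 * exp (-2 * β * R) * ∫ ω, exp (4 * β * |X ω|) ∂μ := by
  rw [← integral_const_mul]
  exact integral_mono_of_nonneg (ae_of_all _ fun ω ↦ by dsimp only; split_ifs <;> positivity)
    (hint.const_mul _) (ae_of_all _ fun ω ↦ ite_sq_le_mul_exp_of_abs_le hβ (hk _))

lemma tendsto_integral_ite_le_abs {E : Type*} [NormedAddCommGroup E] [NormedSpace ℝ E]
    {X : Ω → ℝ} {f : Ω → E} (hX : Measurable X) (hf : AEStronglyMeasurable f μ) :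
    Tendsto (fun R ↦ ∫ ω, (if R ≤ |X ω| then f ω else 0) ∂μ) atTop (𝓝 0) := by
  by_cases hint : ∃ R₀, Integrable (fun ω ↦ if R₀ ≤ |X ω| then f ω else 0) μ
  · obtain ⟨R₀, hR₀⟩ := hint
    have hmeas (R : ℝ) : AEStronglyMeasurable (fun ω ↦ if R ≤ |X ω| then f ω else 0) μ := by
      convert hf.indicator (s := {ω | R ≤ |X ω|}) (measurableSet_le measurable_const hX.abs)
        using 1
      ext ω
      simp [Set.indicator_apply]
    have hdom : ∀ᶠ R in atTop, ∀ᵐ ω ∂μ,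
        ‖if R ≤ |X ω| then f ω else 0‖ ≤ ‖if R₀ ≤ |X ω| then f ω else 0‖ := by
      filter_upwards [eventually_ge_atTop R₀] with R hR
      refine ae_of_all _ fun ω ↦ ?_
      split_ifs with h h' <;> simp only [norm_zero, norm_nonneg, le_refl]
      exact absurd (hR.trans h) h'
    have hlim : ∀ᵐ ω ∂μ, Tendsto (fun R ↦ if R ≤ |X ω| then f ω else 0) atTop (𝓝 0) := by
      refine ae_of_all _ fun ω ↦ tendsto_const_nhds.congr' ?_
      filter_upwards [eventually_gt_atTop |X ω|] with R hR
      simp [not_le.2 hR]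
    simpa using tendsto_integral_filter_of_dominated_convergence _ (.of_forall hmeas) hdom
      hR₀.norm hlim
  · push Not at hint
    simp_rw [integral_undef (hint _)]
    exact tendsto_const_nhds

lemma tendsto_iSup_of_tendsto_of_eventually_le {α : Type*} {l : Filter α} {F : ℕ → α → ℝ}
    {G : α → ℝ} (hF_nonneg : ∀ n x, 0 ≤ F n x) (hF : ∀ n, Tendsto (F n) l (𝓝 0))
    (hFG : ∀ᶠ n in atTop, ∀ x, F n x ≤ G x) (hG : Tendsto G l (𝓝 0)) :
    Tendsto (fun x ↦ ⨆ n, F n x) l (𝓝 0) := by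
  obtain ⟨N, hN⟩ := eventually_atTop.1 hFG
  have hle (x : α) : ⨆ n, F n x ≤ ∑ m ∈ range N, F m x + G x := ciSup_le fun n ↦ by
    have hsum : 0 ≤ ∑ m ∈ range N, F m x := sum_nonneg fun m _ ↦ hF_nonneg m x
    have hG_nonneg : 0 ≤ G x := (hF_nonneg N x).trans (hN N le_rfl x)
    rcases lt_or_ge n N with h | h
    · linarith [single_le_sum (fun m _ ↦ hF_nonneg m x) (mem_range.2 h)]
    · linarith [hN n h x]
  refine squeeze_zero (fun x ↦ Real.iSup_nonneg fun n ↦ hF_nonneg n x) hle ?_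
  simpa using (tendsto_finsetSum _ fun m _ ↦ hF m).add hG

lemma bddAbove_range_one_sub_div_rpow (a : ℝ) :
    BddAbove (Set.range fun n : ℕ ↦ (1 - a / n) ^ (-(n : ℝ) / 2)) := by
  have hlim : Tendsto (fun n : ℕ ↦ ((1 + -a / n) ^ n) ^ (-(1 / 2 : ℝ))) atTop
      (𝓝 (exp (-a) ^ (-(1 / 2 : ℝ)))) :=
    (tendsto_one_add_div_pow_exp (-a)).rpow_const (.inl (exp_pos _).ne')
  refine (hlim.congr' ?_).bddAbove_range
  filter_upwards [eventually_gt_atTop ⌈a⌉₊] with n hn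
  have ha : a / n ≤ 1 :=
    div_le_one_of_le₀ ((Nat.le_ceil a).trans (by exact_mod_cast hn.le)) (by positivity)
  rw [neg_div, ← sub_eq_add_neg, ← rpow_natCast, ← rpow_mul (by linarith)]
  ring_nf

lemma integral_exp_mul_sq_gaussianReal {c : ℝ} (hc : c < 1 / 2) :
    ∫ x, exp (c * x ^ 2) ∂gaussianReal 0 1 = (1 - 2 * c) ^ (-(1 / 2 : ℝ)) := by
  have hdens (x : ℝ) : gaussianPDFReal 0 1 x • exp (c * x ^ 2)
      = (√(2 * π))⁻¹ * exp (-(1 / 2 - c) * x ^ 2) := by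
    simp only [gaussianPDFReal, smul_eq_mul, mul_assoc, ← exp_add]
    push_cast
    ring_nf
  rw [integral_gaussianReal_eq_integral_smul one_ne_zero]
  simp_rw [hdens, integral_const_mul, integral_gaussian]
  have h2c : 0 < 1 - 2 * c := by linarith
  rw [show π / (1 / 2 - c) = 2 * π / (1 - 2 * c) by field_simp, sqrt_div (by positivity),
    rpow_neg h2c.le, ← sqrt_eq_rpow]
  field_simp

lemma integrable_exp_mul_sq_gaussianReal {c : ℝ} (hc : c < 1 / 2) :
    Integrable (fun x ↦ exp (c * x ^ 2)) (gaussianReal 0 1) :=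
  .of_integral_ne_zero <| by
    rw [integral_exp_mul_sq_gaussianReal hc]
    exact (rpow_pos_of_pos (by linarith) _).ne'

lemma integral_exp_mul_mul_gaussianReal (s x : ℝ) :
    ∫ y, exp (s * (x * y)) ∂gaussianReal 0 1 = exp (s ^ 2 / 2 * x ^ 2) := by
  have h := congrFun (mgf_id_gaussianReal (μ := 0) (v := 1)) (s * x)
  simp only [mgf, id] at h
  simp_rw [← mul_assoc, h]
  congr 1
  push_cast
  ring

lemma integrable_exp_mul_mul_prod_gaussianReal {s : ℝ} (hs : s ^ 2 < 1) :
    Integrable (fun p : ℝ × ℝ ↦ exp (s * (p.1 * p.2)))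
      ((gaussianReal 0 1).prod (gaussianReal 0 1)) := by
  refine (integrable_prod_iff (by fun_prop)).2 ⟨ae_of_all _ fun x ↦ ?_, ?_⟩
  · simpa only [mul_assoc] using integrable_exp_mul_gaussianReal (μ := 0) (v := 1) (s * x)
  · simp_rw [norm_of_nonneg (exp_pos _).le, integral_exp_mul_mul_gaussianReal]
    exact integrable_exp_mul_sq_gaussianReal (by linarith)

lemma integral_exp_mul_mul_prod_gaussianReal {s : ℝ} (hs : s ^ 2 < 1) :
    ∫ p : ℝ × ℝ, exp (s * (p.1 * p.2)) ∂(gaussianReal 0 1).prod (gaussianReal 0 1)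
      = (1 - s ^ 2) ^ (-(1 / 2 : ℝ)) := by
  rw [integral_prod _ (integrable_exp_mul_mul_prod_gaussianReal hs)]
  simp_rw [integral_exp_mul_mul_gaussianReal]
  rw [integral_exp_mul_sq_gaussianReal (by linarith)]
  ring_nf

lemma mgf_mul_of_indepFun_gaussianReal [IsProbabilityMeasure μ] {X Y : Ω → ℝ}
    (hX : Measurable X) (hY : Measurable Y) (hXY : IndepFun X Y μ)
    (hlawX : μ.map X = gaussianReal 0 1) (hlawY : μ.map Y = gaussianReal 0 1) {s : ℝ}
    (hs : s ^ 2 < 1) :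
    mgf (X * Y) μ s = (1 - s ^ 2) ^ (-(1 / 2 : ℝ)) := by
  rw [indepFun_iff_map_prod_eq_prod_map_map hX.aemeasurable hY.aemeasurable, hlawX, hlawY] at hXY
  rw [← integral_exp_mul_mul_prod_gaussianReal hs, ← hXY,
    integral_map (by fun_prop) (by fun_prop)]
  rfl

lemma mgf_sum_mul_of_iIndepFun_gaussianReal {ι : Type*} {g : ι × Bool → Ω → ℝ}
    (hmeas : ∀ i, Measurable (g i)) (hindep : iIndepFun g μ)
    (hlaw : ∀ i, μ.map (g i) = gaussianReal 0 1) (S : Finset ι) {s : ℝ} (hs : s ^ 2 < 1) :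
    mgf (∑ i ∈ S, g (i, false) * g (i, true)) μ s = (1 - s ^ 2) ^ (-(#S : ℝ) / 2) := by
  have := hindep.isProbabilityMeasure
  have hpairs : iIndepFun (fun i ↦ g (i, false) * g (i, true)) μ :=
    (hindep.curry hmeas).comp (fun _ v ↦ v false * v true) fun _ ↦ by fun_prop
  have hpair (i : ι) : mgf (g (i, false) * g (i, true)) μ s = (1 - s ^ 2) ^ (-(1 / 2 : ℝ)) :=
    mgf_mul_of_indepFun_gaussianReal (hmeas _) (hmeas _) (hindep.indepFun (by simp)) (hlaw _)
      (hlaw _) hs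
  rw [hpairs.mgf_sum (fun i ↦ (hmeas _).mul (hmeas _)), prod_congr rfl fun i _ ↦ hpair i,
    prod_const, ← rpow_natCast, ← rpow_mul (by nlinarith)]
  ring_nf

noncomputable def normalizedSumMul (g : ℕ × Bool → Ω → ℝ) (n : ℕ) (ω : Ω) : ℝ :=
  (n : ℝ) ^ (-(1 : ℝ) / 2) * ∑ j ∈ range n, g (j, false) ω * g (j, true) ω

variable {g : ℕ × Bool → Ω → ℝ}

lemma measurable_normalizedSumMul (hmeas : ∀ i, Measurable (g i)) (n : ℕ) :
    Measurable (normalizedSumMul g n) := by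
  unfold normalizedSumMul
  fun_prop

lemma mgf_normalizedSumMul (hmeas : ∀ i, Measurable (g i)) (hindep : iIndepFun g μ)
    (hlaw : ∀ i, μ.map (g i) = gaussianReal 0 1) (n : ℕ) {t : ℝ} (ht : t ^ 2 < n) :
    mgf (normalizedSumMul g n) μ t = (1 - t ^ 2 / n) ^ (-(n : ℝ) / 2) := by
  have hscale : ((n : ℝ) ^ (-(1 : ℝ) / 2) * t) ^ 2 = t ^ 2 / n := by
    rw [mul_pow, ← rpow_natCast, ← rpow_mul n.cast_nonneg]
    norm_num [rpow_neg_one, div_eq_inv_mul]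
  have hs : ((n : ℝ) ^ (-(1 : ℝ) / 2) * t) ^ 2 < 1 := by
    rw [hscale]
    exact (div_lt_one (by linarith [sq_nonneg t])).2 ht
  have hfun : normalizedSumMul g n
      = fun ω ↦ (n : ℝ) ^ (-(1 : ℝ) / 2) * (∑ j ∈ range n, g (j, false) * g (j, true)) ω := by
    ext; simp [normalizedSumMul]
  rw [hfun, mgf_const_mul, mgf_sum_mul_of_iIndepFun_gaussianReal hmeas hindep hlaw _ hs,
    card_range, hscale]

lemma integrable_exp_mul_normalizedSumMul (hmeas : ∀ i, Measurable (g i))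
    (hindep : iIndepFun g μ) (hlaw : ∀ i, μ.map (g i) = gaussianReal 0 1) (n : ℕ) {t : ℝ}
    (ht : t ^ 2 < n) :
    Integrable (fun ω ↦ exp (t * normalizedSumMul g n ω)) μ := by
  have := hindep.isProbabilityMeasure
  refine mgf_pos_iff.1 ?_
  rw [mgf_normalizedSumMul hmeas hindep hlaw n ht]
  exact rpow_pos_of_pos (by rw [sub_pos, div_lt_one (by nlinarith)]; exact ht) _

lemma integrable_exp_mul_abs_normalizedSumMul (hmeas : ∀ i, Measurable (g i))
    (hindep : iIndepFun g μ) (hlaw : ∀ i, μ.map (g i) = gaussianReal 0 1) (n : ℕ) {t : ℝ}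
    (ht : t ^ 2 < n) :
    Integrable (fun ω ↦ exp (t * |normalizedSumMul g n ω|)) μ :=
  integrable_exp_mul_abs (integrable_exp_mul_normalizedSumMul hmeas hindep hlaw n ht)
    (integrable_exp_mul_normalizedSumMul hmeas hindep hlaw n (by simpa using ht))

lemma integral_exp_mul_abs_normalizedSumMul_le (hmeas : ∀ i, Measurable (g i))
    (hindep : iIndepFun g μ) (hlaw : ∀ i, μ.map (g i) = gaussianReal 0 1) (n : ℕ) {t : ℝ}
    (ht : t ^ 2 < n) :
    ∫ ω, exp (t * |normalizedSumMul g n ω|) ∂μ ≤ 2 * (1 - t ^ 2 / n) ^ (-(n : ℝ) / 2) := by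
  have ht' : (-t) ^ 2 < n := by simpa using ht
  calc ∫ ω, exp (t * |normalizedSumMul g n ω|) ∂μ
      ≤ mgf (normalizedSumMul g n) μ t + mgf (normalizedSumMul g n) μ (-t) :=
        integral_exp_mul_abs_le_mgf_add_mgf
          (integrable_exp_mul_normalizedSumMul hmeas hindep hlaw n ht)
          (integrable_exp_mul_normalizedSumMul hmeas hindep hlaw n ht')
    _ = 2 * (1 - t ^ 2 / n) ^ (-(n : ℝ) / 2) := by
        rw [mgf_normalizedSumMul hmeas hindep hlaw n ht,
          mgf_normalizedSumMul hmeas hindep hlaw n ht', neg_sq]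
        ring

end

theorem stmt18_general {Ω : Type*} [MeasureSpace Ω] [IsProbabilityMeasure (ℙ : Measure Ω)]
    (k : ℝ → ℝ) (hk : Measurable k) (C β : ℝ) (hβ : 0 < β)
    (hbound : ∀ x : ℝ, |k x| ≤ C * Real.exp (β * |x|))
    (g : ℕ × Bool → Ω → ℝ) (hgmeas : ∀ i, Measurable (g i))
    (hindep : iIndepFun g ℙ)
    (hlaw : ∀ i, Measure.map (g i) ℙ = gaussianReal 0 1)
    (y : ℕ → Ω → ℝ)
    (hy : ∀ n ω, y n ω =
      (n : ℝ) ^ (-(1:ℝ)/2) * ∑ j ∈ range n, g (j, false) ω * g (j, true) ω) :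
    (∃ B : ℝ, ∀ n : ℕ, 16 * β ^ 2 < n →
      (∫ ω, Real.exp (4 * β * |y n ω|) ∂ℙ) ≤ B) ∧
    Filter.Tendsto
      (fun R : ℝ => ⨆ n : ℕ, ∫ ω, (if R ≤ |y n ω| then (k (y n ω)) ^ 2 else 0) ∂ℙ)
      Filter.atTop (nhds 0) := by
  obtain rfl : y = normalizedSumMul g := funext fun n ↦ funext (hy n)
  obtain ⟨M, hM⟩ := bddAbove_range_one_sub_div_rpow (16 * β ^ 2)
  have hsq : (4 * β) ^ 2 = 16 * β ^ 2 := by ring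
  have hbdd (n : ℕ) (hn : 16 * β ^ 2 < n) :
      ∫ ω, exp (4 * β * |normalizedSumMul g n ω|) ≤ 2 * M := by
    have h := integral_exp_mul_abs_normalizedSumMul_le hgmeas hindep hlaw n (hsq ▸ hn)
    rw [hsq] at h
    linarith [hM ⟨n, rfl⟩]
  refine ⟨⟨2 * M, hbdd⟩, tendsto_iSup_of_tendsto_of_eventually_le
    (G := fun R ↦ C ^ 2 * exp (-2 * β * R) * (2 * M))
    (fun n R ↦ integral_nonneg fun ω ↦ by dsimp only; split_ifs <;> positivity)
    (fun n ↦ tendsto_integral_ite_le_abs (measurable_normalizedSumMul hgmeas n)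
      ((hk.comp (measurable_normalizedSumMul hgmeas n)).pow_const 2).aestronglyMeasurable)
    ?_ ?_⟩
  · filter_upwards [eventually_gt_atTop ⌈16 * β ^ 2⌉₊] with n hn R
    have hn' : 16 * β ^ 2 < n := Nat.lt_of_ceil_lt hn
    refine (integral_ite_sq_le_of_abs_le_mul_exp hβ.le hbound
      (integrable_exp_mul_abs_normalizedSumMul hgmeas hindep hlaw n (hsq ▸ hn')) R).trans ?_
    gcongr
    exact hbdd n hn'
  · have hexp : Tendsto (fun R ↦ exp (-2 * β * R)) atTop (𝓝 0) :=
      tendsto_exp_atBot.comp (tendsto_id.const_mul_atTop_of_neg (by linarith))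
    simpa using (hexp.const_mul (C ^ 2)).mul_const (2 * M)

theorem stmt18 {Ω : Type*} [MeasureSpace Ω] [IsProbabilityMeasure (ℙ : Measure Ω)]
    (k : ℝ → ℝ) (hk : Measurable k) (C β : ℝ) (hC : 0 < C) (hβ : 0 < β)
    (hbound : ∀ x : ℝ, |k x| ≤ C * Real.exp (β * |x|))
    (g : ℕ × Bool → Ω → ℝ) (hgmeas : ∀ i, Measurable (g i))
    (hindep : iIndepFun g ℙ)
    (hlaw : ∀ i, Measure.map (g i) ℙ = gaussianReal 0 1)
    (y : ℕ → Ω → ℝ)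
    (hy : ∀ n ω, y n ω =
      (n : ℝ) ^ (-(1:ℝ)/2) * ∑ j ∈ range n, g (j, false) ω * g (j, true) ω) :
    (∃ B : ℝ, ∀ n : ℕ, 16 * β ^ 2 < n →
      (∫ ω, Real.exp (4 * β * |y n ω|) ∂ℙ) ≤ B) ∧
    Filter.Tendsto
      (fun R : ℝ => ⨆ n : ℕ, ∫ ω, (if R ≤ |y n ω| then (k (y n ω)) ^ 2 else 0) ∂ℙ)
      Filter.atTop (nhds 0) :=
  stmt18_general k hk C β hβ hbound g hgmeas hindep hlaw y hy
end
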